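/- arXiv:1904.00455 — 8 statements merged into one kernel-verified Lean document; each statement's English description precedes it below -/
import Mathlib

section
/- The orbital matrices T_0, …, T_r are linearly independent over ℂ; consequently the commutant {f ∈ M_n(ℂ) : P_σ f = f P_σ for all σ ∈ G} is a complex vector space with basis (T_0,…,T_r), of dimension r + 1, the number of orbits of the stabilizer G_0 on {0,…,n−1}. -/
/-!
A matrix commutes with every `P_σ`, `σ ∈ G`, iff its entries are constant on the `G`-orbits of
pairs `(i, j)`. Since `σ_j ∈ G` maps `0` to `j`, every such orbit meets the column `j = 0`, and it
does so in exactly one orbit of the stabilizer `G_0`; so an invariant matrix `f` is determined by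
the values `f k 0`, one per `G_0`-orbit, and `T_s` is the indicator matrix of the `G`-orbit of
`O_0^s × {0}`. Indicator matrices of disjoint nonempty sets are linearly independent, and the
invariant matrices are exactly their linear combinations.
-/

/-- The orbit of `j` under the stabilizer of `i` in `G`. -/
def stabOrbit {n : ℕ} (G : Subgroup (Equiv.Perm (Fin n))) (i j : Fin n) : Set (Fin n) :=
  {k | ∃ σ ∈ G, σ i = i ∧ σ j = k}

/-- The permutation matrix `P_σ` of a permutation `σ`, characterized by `P_σ e_i = e_{σ i}`. -/
def permMatrix {n : ℕ} (σ : Equiv.Perm (Fin n)) : Matrix (Fin n) (Fin n) ℂ :=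
  Matrix.of fun i j => if i = σ j then 1 else 0

open Equiv Function

variable {n : ℕ} {G : Subgroup (Perm (Fin n))}

section StabOrbit

theorem mem_stabOrbit_self (i j : Fin n) : j ∈ stabOrbit G i j :=
  ⟨1, G.one_mem, rfl, rfl⟩

theorem apply_mem_stabOrbit {g : Perm (Fin n)} (hg : g ∈ G) {i j k : Fin n} (hgi : g i = i)
    (hk : k ∈ stabOrbit G i j) : g k ∈ stabOrbit G i j := by
  obtain ⟨σ, hσ, hσi, rfl⟩ := hk
  exact ⟨g * σ, mul_mem hg hσ, by simp [hσi, hgi], rfl⟩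

theorem apply_mem_stabOrbit_iff {g : Perm (Fin n)} (hg : g ∈ G) {i j k : Fin n} (hgi : g i = i) :
    g k ∈ stabOrbit G i j ↔ k ∈ stabOrbit G i j := by
  refine ⟨fun h => ?_, apply_mem_stabOrbit hg hgi⟩
  simpa using apply_mem_stabOrbit (inv_mem hg) (by rw [Perm.inv_eq_iff_eq, hgi]) h

theorem mem_stabOrbit_comm {i j k : Fin n} (hk : k ∈ stabOrbit G i j) : j ∈ stabOrbit G i k := by
  obtain ⟨σ, hσ, hσi, rfl⟩ := hk
  exact (apply_mem_stabOrbit_iff hσ hσi).1 (mem_stabOrbit_self i (σ j))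

theorem stabOrbit_eq_of_mem {i j k : Fin n} (hk : k ∈ stabOrbit G i j) :
    stabOrbit G i k = stabOrbit G i j := by
  ext x
  constructor
  · rintro ⟨τ, hτ, hτi, rfl⟩
    exact apply_mem_stabOrbit hτ hτi hk
  · rintro ⟨τ, hτ, hτi, rfl⟩
    exact apply_mem_stabOrbit hτ hτi (mem_stabOrbit_comm hk)

end StabOrbit

section PermMatrix

theorem permMatrix_mul_apply (σ : Perm (Fin n)) (f : Matrix (Fin n) (Fin n) ℂ) (i j : Fin n) :
    (permMatrix σ * f) i j = f (σ⁻¹ i) j := by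
  simp [permMatrix, Matrix.mul_apply, ← Perm.inv_eq_iff_eq]

theorem mul_permMatrix_apply (σ : Perm (Fin n)) (f : Matrix (Fin n) (Fin n) ℂ) (i j : Fin n) :
    (f * permMatrix σ) i j = f i (σ j) := by
  simp [permMatrix, Matrix.mul_apply]

theorem permMatrix_mul_eq_mul_permMatrix_iff {σ : Perm (Fin n)} {f : Matrix (Fin n) (Fin n) ℂ} :
    permMatrix σ * f = f * permMatrix σ ↔ ∀ i j, f (σ i) (σ j) = f i j := by
  constructor
  · intro h i j
    simpa [permMatrix_mul_apply, mul_permMatrix_apply] using (congrFun₂ h (σ i) j).symm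
  · intro h
    ext i j
    simpa [permMatrix_mul_apply, mul_permMatrix_apply] using (h (σ⁻¹ i) j).symm

theorem apply_apply_eq_of_mem_centralizer {f : Matrix (Fin n) (Fin n) ℂ}
    (hf : f ∈ Set.centralizer (permMatrix '' (G : Set (Perm (Fin n))))) {σ : Perm (Fin n)}
    (hσ : σ ∈ G) (i j : Fin n) : f (σ i) (σ j) = f i j :=
  permMatrix_mul_eq_mul_permMatrix_iff.1 (hf _ ⟨σ, hσ, rfl⟩) i j

theorem apply_eq_of_mem_centralizer [NeZero n] {f : Matrix (Fin n) (Fin n) ℂ}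
    (hf : f ∈ Set.centralizer (permMatrix '' (G : Set (Perm (Fin n))))) {τ : Perm (Fin n)}
    (hτ : τ ∈ G) {i j k : Fin n} (hτj : τ j = 0) (h : τ i ∈ stabOrbit G 0 k) : f i j = f k 0 := by
  obtain ⟨g, hg, hg0, hgk⟩ := h
  calc f i j = f (τ i) (τ j) := (apply_apply_eq_of_mem_centralizer hf hτ i j).symm
    _ = f (g k) (g 0) := by rw [hgk, hg0, hτj]
    _ = f k 0 := apply_apply_eq_of_mem_centralizer hf hg k 0

end PermMatrix

section OrbitalMatrix

variable {σ' : Fin n → Perm (Fin n)}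

/-- `orbitalMatrix σ' (O_0^s)` is the matrix `T_s`. -/
noncomputable def orbitalMatrix (σ' : Fin n → Perm (Fin n)) (S : Set (Fin n)) :
    Matrix (Fin n) (Fin n) ℂ :=
  Matrix.of fun i j => (σ' j '' S).indicator (fun _ => 1) i

theorem orbitalMatrix_apply (S : Set (Fin n)) (i j : Fin n) :
    orbitalMatrix σ' S i j = S.indicator (fun _ => 1) ((σ' j)⁻¹ i) := by
  classical
  simp only [orbitalMatrix, Matrix.of_apply, Set.indicator_apply, Set.mem_image_equiv, Perm.inv_def]

variable [NeZero n]

theorem orbitalMatrix_stabOrbit_apply_apply (hσ'G : ∀ i, σ' i ∈ G) (hσ'0 : ∀ i, σ' i 0 = i)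
    (k : Fin n) {σ : Perm (Fin n)} (hσ : σ ∈ G) (i j : Fin n) :
    orbitalMatrix σ' (stabOrbit G 0 k) (σ i) (σ j) = orbitalMatrix σ' (stabOrbit G 0 k) i j := by
  classical
  set g := (σ' (σ j))⁻¹ * σ * σ' j
  have hg : g ∈ G := mul_mem (mul_mem (inv_mem (hσ'G _)) hσ) (hσ'G _)
  have hg0 : g 0 = 0 := by simp [g, hσ'0, Equiv.symm_apply_eq]
  have hgi : (σ' (σ j))⁻¹ (σ i) = g ((σ' j)⁻¹ i) := by simp [g]
  simp only [orbitalMatrix_apply, hgi, Set.indicator_apply, apply_mem_stabOrbit_iff hg hg0]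

theorem orbitalMatrix_stabOrbit_mem_centralizer (hσ'G : ∀ i, σ' i ∈ G) (hσ'0 : ∀ i, σ' i 0 = i)
    (k : Fin n) :
    orbitalMatrix σ' (stabOrbit G 0 k) ∈
      Set.centralizer (permMatrix '' (G : Set (Perm (Fin n)))) := by
  rintro _ ⟨σ, hσ, rfl⟩
  exact permMatrix_mul_eq_mul_permMatrix_iff.2 (orbitalMatrix_stabOrbit_apply_apply hσ'G hσ'0 k hσ)

variable {ι : Type*} [Fintype ι] {o : ι → Fin n}

theorem sum_smul_orbitalMatrix_stabOrbit_apply (ho : Injective (stabOrbit G 0 ∘ o)) (c : ι → ℂ)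
    {i j : Fin n} {s : ι} (h : (σ' j)⁻¹ i ∈ stabOrbit G 0 (o s)) :
    (∑ t, c t • orbitalMatrix σ' (stabOrbit G 0 (o t))) i j = c s := by
  rw [Matrix.sum_apply, Finset.sum_eq_single s]
  · rw [Matrix.smul_apply, orbitalMatrix_apply, Set.indicator_of_mem h, smul_eq_mul, mul_one]
  · intro t _ hts
    have ht : (σ' j)⁻¹ i ∉ stabOrbit G 0 (o t) := fun ht =>
      hts (ho ((stabOrbit_eq_of_mem ht).symm.trans (stabOrbit_eq_of_mem h)))
    rw [Matrix.smul_apply, orbitalMatrix_apply, Set.indicator_of_notMem ht, smul_zero]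
  · simp

theorem linearIndependent_orbitalMatrix_stabOrbit (ho : Injective (stabOrbit G 0 ∘ o)) :
    LinearIndependent ℂ fun s => orbitalMatrix σ' (stabOrbit G 0 (o s)) := by
  refine Fintype.linearIndependent_iff.2 fun c hc s => ?_
  have h := sum_smul_orbitalMatrix_stabOrbit_apply (σ' := σ') ho c (i := σ' 0 (o s)) (j := 0)
    (by simpa using mem_stabOrbit_self 0 (o s))
  rw [hc] at h
  exact h.symm

theorem centralizer_subset_span_orbitalMatrix_stabOrbit (hσ'G : ∀ i, σ' i ∈ G)
    (hσ'0 : ∀ i, σ' i 0 = i) (ho : Injective (stabOrbit G 0 ∘ o))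
    (hcover : ∀ k, ∃ s, stabOrbit G 0 k = stabOrbit G 0 (o s)) :
    Set.centralizer (permMatrix '' (G : Set (Perm (Fin n)))) ⊆
      Submodule.span ℂ (Set.range fun s => orbitalMatrix σ' (stabOrbit G 0 (o s))) := by
  intro f hf
  have hf_eq : f = ∑ s, f (o s) 0 • orbitalMatrix σ' (stabOrbit G 0 (o s)) := by
    ext i j
    obtain ⟨s, hs⟩ := hcover ((σ' j)⁻¹ i)
    have hmem : (σ' j)⁻¹ i ∈ stabOrbit G 0 (o s) := hs ▸ mem_stabOrbit_self 0 _
    rw [sum_smul_orbitalMatrix_stabOrbit_apply ho _ hmem]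
    exact apply_eq_of_mem_centralizer hf (inv_mem (hσ'G j)) (by rw [Perm.inv_eq_iff_eq, hσ'0]) hmem
  rw [hf_eq]
  exact Submodule.sum_mem _ fun s _ => Submodule.smul_mem _ _ (Submodule.subset_span ⟨s, rfl⟩)

theorem span_orbitalMatrix_stabOrbit_eq_centralizer (hσ'G : ∀ i, σ' i ∈ G)
    (hσ'0 : ∀ i, σ' i 0 = i) (ho : Injective (stabOrbit G 0 ∘ o))
    (hcover : ∀ k, ∃ s, stabOrbit G 0 k = stabOrbit G 0 (o s)) :
    (Submodule.span ℂ (Set.range fun s => orbitalMatrix σ' (stabOrbit G 0 (o s))) :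
        Set (Matrix (Fin n) (Fin n) ℂ)) =
      Set.centralizer (permMatrix '' (G : Set (Perm (Fin n)))) := by
  refine subset_antisymm ?_ (centralizer_subset_span_orbitalMatrix_stabOrbit hσ'G hσ'0 ho hcover)
  refine (Submodule.span_le (p := Subalgebra.toSubmodule (Subalgebra.centralizer ℂ _))).2 ?_
  rintro _ ⟨s, rfl⟩
  exact orbitalMatrix_stabOrbit_mem_centralizer hσ'G hσ'0 (o s)

end OrbitalMatrix

theorem stmt7_general {n r : ℕ} [NeZero n]
    (G : Subgroup (Equiv.Perm (Fin n)))
    (O0 : Fin (r + 1) → Set (Fin n))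
    (hO0orbit : ∀ s, ∃ j, O0 s = stabOrbit G 0 j)
    (hO0cover : ∀ j : Fin n, ∃ s, stabOrbit G 0 j = O0 s)
    (hO0inj : Function.Injective O0)
    (σ' : Fin n → Equiv.Perm (Fin n))
    (hσ'G : ∀ i, σ' i ∈ G) (hσ'0 : ∀ i, σ' i 0 = i)
    (O : Fin n → Fin (r + 1) → Set (Fin n))
    (hO : ∀ i s, O i s = ⇑(σ' i) '' O0 s)
    (T : Fin (r + 1) → Matrix (Fin n) (Fin n) ℂ)
    (hT : ∀ s (i j : Fin n), T s i j = (O j s).indicator (fun _ => (1 : ℂ)) i) :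
    LinearIndependent ℂ T ∧
      (Submodule.span ℂ (Set.range T) : Set (Matrix (Fin n) (Fin n) ℂ)) =
        {f | ∀ σ ∈ G, permMatrix σ * f = f * permMatrix σ} ∧
      Module.finrank ℂ (Submodule.span ℂ (Set.range T)) = r + 1 ∧
      (Set.range (stabOrbit G 0)).ncard = r + 1 := by
  choose o ho using hO0orbit
  obtain rfl : O0 = stabOrbit G 0 ∘ o := funext ho
  obtain rfl : T = fun s => orbitalMatrix σ' (stabOrbit G 0 (o s)) := by
    ext s i j
    rw [hT, hO]
    rfl
  have hli := linearIndependent_orbitalMatrix_stabOrbit (σ' := σ') hO0inj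
  have hrange : Set.range (stabOrbit G 0) = Set.range (stabOrbit G 0 ∘ o) := by
    refine (Set.range_comp_subset_range o _).antisymm' ?_
    rintro _ ⟨k, rfl⟩
    exact (hO0cover k).imp fun _ => Eq.symm
  refine ⟨hli, ?_, by simpa using finrank_span_eq_card hli, ?_⟩
  · rw [span_orbitalMatrix_stabOrbit_eq_centralizer hσ'G hσ'0 hO0inj hO0cover]
    ext f
    simp [Set.centralizer]
  · rw [hrange, Set.ncard_range_of_injective hO0inj]
    simp

/-- For a transitive subgroup `G` of the symmetric group on `{0,…,n−1}`, with
`O_0^0 = {0}, O_0^1, …, O_0^r` the orbits of the stabilizer `G_0`,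
`O_i^s := σ_i(O_0^s)` for chosen `σ_i ∈ G` with `σ_i(0) = i`, and `T_s` the orbital
matrices: the `T_0, …, T_r` are linearly independent over `ℂ`, and the commutant
`{f | P_σ f = f P_σ for all σ ∈ G}` is a complex vector space with basis `(T_0,…,T_r)`
— i.e. it equals their span — of dimension `r + 1`, the number of orbits of `G_0`. -/
theorem stmt7 {n r : ℕ} [NeZero n]
    (G : Subgroup (Equiv.Perm (Fin n)))
    (htrans : ∀ i j : Fin n, ∃ σ ∈ G, σ i = j)
    (O0 : Fin (r + 1) → Set (Fin n))
    (hO00 : O0 0 = {0})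
    (hO0orbit : ∀ s, ∃ j, O0 s = stabOrbit G 0 j)
    (hO0cover : ∀ j : Fin n, ∃ s, stabOrbit G 0 j = O0 s)
    (hO0inj : Function.Injective O0)
    (σ' : Fin n → Equiv.Perm (Fin n))
    (hσ'G : ∀ i, σ' i ∈ G) (hσ'0 : ∀ i, σ' i 0 = i)
    (O : Fin n → Fin (r + 1) → Set (Fin n))
    (hO : ∀ i s, O i s = ⇑(σ' i) '' O0 s)
    (T : Fin (r + 1) → Matrix (Fin n) (Fin n) ℂ)
    (hT : ∀ s (i j : Fin n), T s i j = (O j s).indicator (fun _ => (1 : ℂ)) i) :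
    LinearIndependent ℂ T ∧
      (Submodule.span ℂ (Set.range T) : Set (Matrix (Fin n) (Fin n) ℂ)) =
        {f | ∀ σ ∈ G, permMatrix σ * f = f * permMatrix σ} ∧
      Module.finrank ℂ (Submodule.span ℂ (Set.range T)) = r + 1 ∧
      (Set.range (stabOrbit G 0)).ncard = r + 1 :=
  stmt7_general G O0 hO0orbit hO0cover hO0inj σ' hσ'G hσ'0 O hO T hT
end

section
/- Let X be a nontrivial circulant p-graph. For every i ∈ Z_p, the map Φ_i : E → Aut_i(X) sending e ∈ E to the permutation x ↦ i + e(x − i) of Z_p is a group isomorphism from E onto the stabilizer Aut_i(X) of the vertex i in Aut(X). -/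
/-- `σ` is an automorphism of the graph `X`. -/
def IsCircAut {p : ℕ} (X : SimpleGraph (ZMod p)) (σ : Equiv.Perm (ZMod p)) : Prop :=
  ∀ i j : ZMod p, X.Adj (σ i) (σ j) ↔ X.Adj i j

/-- The affine permutation `x ↦ i + a·(x − i)` of `Z_p` attached to a unit `a`. -/
noncomputable def Phi {p : ℕ} [Fact p.Prime] (i : ZMod p) (a : (ZMod p)ˣ) :
    Equiv.Perm (ZMod p) :=
  (Equiv.subRight i).trans ((Equiv.mulLeft₀ (a : ZMod p) a.ne_zero).trans (Equiv.addLeft i))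

/-!
Every function `ZMod p → ZMod p` is polynomial of degree `< p`; `degLT k` denotes those of
degree `< k`. Automorphisms act on functions by `f ↦ f ∘ σ`, preserving the dot product and
products and commuting with the Laplacian of `X`. If `T` is the connection set and `m` the least
positive exponent with `∑ s ∈ T, s ^ m ≠ 0`, the Laplacian maps `degLT n` onto `degLT (n - m)`.
Moreover `2 * m < p`: if the power sums of orders `1, …, (p - 1) / 2` all vanish, the indicator
of `T` agrees off `0` with a `{0, 1}`-valued function of low degree and zero sum, which must be
constant, so `X` is empty or complete. Orthogonal complements exchange `degLT k` and
`degLT (p - k)` and products add degrees, so starting from all functions the subspaces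
`degLT (p - m)`, `degLT m`, `degLT (p - 2m)`, `degLT (p - 2)` and finally `degLT 2` are
invariant. Hence an automorphism fixing `0` is affine, i.e. `x ↦ a * x`; conjugating by a
translation handles an arbitrary vertex `i`.
-/

open Finset

section Invariance

variable {α K : Type*} [Field K]

def IsPermInvariant (G : Subgroup (Equiv.Perm α)) (W : Submodule K (α → K)) : Prop :=
  ∀ τ ∈ G, ∀ f ∈ W, f ∘ τ ∈ W

variable {G : Subgroup (Equiv.Perm α)} {W W' : Submodule K (α → K)}

theorem IsPermInvariant.orthogonalBilin [Fintype α] (hW : IsPermInvariant G W) :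
    IsPermInvariant G (W.orthogonalBilin (dotProductBilin K K)) := by
  intro τ hτ f hf g hg
  simpa [← dotProduct_comp_equiv_symm] using hf _ (hW τ⁻¹ (inv_mem hτ) g hg)

theorem IsPermInvariant.mul (hW : IsPermInvariant G W) (hW' : IsPermInvariant G W') :
    IsPermInvariant G (W * W') := fun τ hτ _ hf ↦
  Submodule.mul_induction_on hf
    (fun f hf g hg ↦ Submodule.mul_mem_mul (hW τ hτ f hf) (hW' τ hτ g hg)) fun _ _ ↦ add_mem

theorem IsPermInvariant.map (hW : IsPermInvariant G W) {L : (α → K) →ₗ[K] (α → K)}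
    (hL : ∀ τ ∈ G, ∀ f, L (f ∘ τ) = L f ∘ τ) : IsPermInvariant G (W.map L) := by
  rintro τ hτ _ ⟨f, hf, rfl⟩
  exact hL τ hτ f ▸ Submodule.mem_map_of_mem (hW τ hτ f hf)

end Invariance

section Laplacian

variable {A : Type*} [AddCommGroup A] (R : Type*) [CommRing R]

/-- Minus the Laplacian of the Cayley graph of `A` with connection set `T`. -/
def circulantLaplacian (T : Finset A) : (A → R) →ₗ[R] (A → R) where
  toFun f x := ∑ s ∈ T, (f (x + s) - f x)
  map_add' f g := by
    funext x
    simp only [Pi.add_apply, ← sum_add_distrib]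
    exact sum_congr rfl fun _ _ ↦ by ring
  map_smul' c f := by
    funext x
    simp only [Pi.smul_apply, smul_eq_mul, RingHom.id_apply, mul_sum, mul_sub]

variable {R}

theorem circulantLaplacian_apply (T : Finset A) (f : A → R) (x : A) :
    circulantLaplacian R T f x = ∑ s ∈ T, (f (x + s) - f x) :=
  rfl

theorem circulantLaplacian_comp {T : Finset A} {τ : Equiv.Perm A}
    (hτ : ∀ x y, τ y - τ x ∈ T ↔ y - x ∈ T) (f : A → R) :
    circulantLaplacian R T (f ∘ τ) = circulantLaplacian R T f ∘ τ := by
  funext x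
  refine sum_nbij' (fun s ↦ τ (x + s) - τ x) (fun t ↦ τ.symm (τ x + t) - x) ?_ ?_ ?_ ?_ ?_
  · intro s hs; simpa [hτ] using hs
  · intro t ht; simpa [← hτ] using ht
  · intro s _; simp
  · intro t _; simp
  · intro s _; simp

end Laplacian

section PolynomialFunctions

variable (R : Type*) [CommRing R]

def degLT (k : ℕ) : Submodule R (R → R) :=
  Submodule.span R ((fun d (x : R) ↦ x ^ d) '' Set.Iio k)

variable {R}

theorem pow_mem_degLT {d k : ℕ} (h : d < k) : (fun x : R ↦ x ^ d) ∈ degLT R k :=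
  Submodule.subset_span ⟨d, h, rfl⟩

theorem one_mem_degLT {k : ℕ} (hk : 0 < k) : (1 : R → R) ∈ degLT R k := by
  convert pow_mem_degLT (R := R) hk
  simp

theorem degLT_mono {k l : ℕ} (h : k ≤ l) : degLT R k ≤ degLT R l :=
  Submodule.span_mono (Set.image_mono fun _ hd ↦ lt_of_lt_of_le hd h)

theorem degLT_succ (k : ℕ) :
    degLT R (k + 1) = Submodule.span R {fun x : R ↦ x ^ k} ⊔ degLT R k := by
  have : Set.Iio (k + 1) = insert k (Set.Iio k) := by ext; simp
  rw [degLT, degLT, ← Submodule.span_insert, this, Set.image_insert_eq]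

theorem degLT_two_eq_span : degLT R 2 = Submodule.span R {1, id} := by
  have : Set.Iio 2 = {0, 1} := by ext n; simp; omega
  rw [degLT, this, Set.image_pair]
  simp only [pow_zero, pow_one]
  rfl

theorem degLT_mul_degLT {i j : ℕ} (hi : 1 ≤ i) (hj : 1 ≤ j) :
    degLT R i * degLT R j = degLT R (i + j - 1) := by
  rw [degLT, degLT, Submodule.span_mul_span, degLT]
  congr 1
  ext f
  simp only [Set.mem_mul, Set.mem_image, Set.mem_Iio]
  constructor
  · rintro ⟨_, ⟨a, ha, rfl⟩, _, ⟨b, hb, rfl⟩, rfl⟩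
    exact ⟨a + b, by omega, funext fun x ↦ pow_add x a b⟩
  · rintro ⟨c, hc, rfl⟩
    refine ⟨_, ⟨min c (i - 1), by omega, rfl⟩, _, ⟨c - min c (i - 1), by omega, rfl⟩, ?_⟩
    funext x
    simp only [Pi.mul_apply, ← pow_add]
    congr 1
    omega

theorem pow_mem_degLT_of_mem_degLT_two {f : R → R} (hf : f ∈ degLT R 2) (n : ℕ) :
    f ^ n ∈ degLT R (n + 1) := by
  induction n with
  | zero => simpa using one_mem_degLT (R := R) one_pos
  | succ n ih =>
    rw [pow_succ, show n + 1 + 1 = n + 1 + 2 - 1 by omega,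
      ← degLT_mul_degLT (by omega) one_le_two]
    exact Submodule.mul_mem_mul ih hf

theorem circulantLaplacian_pow (T : Finset R) (d : ℕ) :
    circulantLaplacian R T (fun x ↦ x ^ d) =
      ∑ k ∈ range d, ((d.choose k : R) * ∑ s ∈ T, s ^ (d - k)) • fun x ↦ x ^ k := by
  funext x
  have hbinom (s : R) :
      (x + s) ^ d - x ^ d = ∑ k ∈ range d, x ^ k * s ^ (d - k) * d.choose k := by
    rw [add_pow, sum_range_succ]
    simp
  simp only [circulantLaplacian_apply, hbinom, Finset.sum_apply, Pi.smul_apply, smul_eq_mul]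
  rw [sum_comm]
  exact sum_congr rfl fun k _ ↦ by
    rw [mul_sum, sum_mul]
    exact sum_congr rfl fun s _ ↦ by ring

variable {T : Finset R} {m : ℕ} (hT : ∀ j, 0 < j → j < m → ∑ s ∈ T, s ^ j = 0)
include hT

theorem circulantLaplacian_pow_mem_degLT (d : ℕ) :
    circulantLaplacian R T (fun x ↦ x ^ d) ∈ degLT R (d + 1 - m) := by
  rw [circulantLaplacian_pow]
  refine Submodule.sum_mem _ fun k hk ↦ ?_
  rw [mem_range] at hk
  by_cases hkm : k < d + 1 - m
  · exact Submodule.smul_mem _ _ (pow_mem_degLT hkm)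
  · simp [hT (d - k) (by omega) (by omega)]

theorem circulantLaplacian_pow_add_sub_mem_degLT (hm : 0 < m) (c : ℕ) :
    circulantLaplacian R T (fun x ↦ x ^ (c + m)) -
      (((c + m).choose c : R) * ∑ s ∈ T, s ^ m) • (fun x ↦ x ^ c) ∈ degLT R c := by
  rw [circulantLaplacian_pow, ← add_sum_erase _ _ (mem_range.2 (by omega : c < c + m)),
    Nat.add_sub_cancel_left, add_sub_cancel_left]
  refine Submodule.sum_mem _ fun k hk ↦ ?_
  obtain ⟨hkc, hk⟩ := mem_erase.1 hk
  rw [mem_range] at hk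
  rcases lt_or_gt_of_ne hkc with hlt | hgt
  · exact Submodule.smul_mem _ _ (pow_mem_degLT hlt)
  · simp [hT (c + m - k) (by omega) (by omega)]

end PolynomialFunctions

section PolynomialFunctionsModP

variable {p : ℕ} [Fact p.Prime]

theorem ZMod.sum_pow_card_sub_one : ∑ x : ZMod p, x ^ (p - 1) = -1 := by
  have hp := (Fact.out : p.Prime).one_lt
  rw [← add_sum_erase _ _ (mem_univ 0), zero_pow (by omega), zero_add,
    sum_congr rfl fun x hx ↦ ZMod.pow_card_sub_one_eq_one (ne_of_mem_erase hx), sum_const,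
    card_erase_of_mem (mem_univ 0), card_univ, ZMod.card, nsmul_one, Nat.cast_sub hp.le,
    ZMod.natCast_self, Nat.cast_one, zero_sub]

theorem ZMod.natCast_choose_ne_zero {n k : ℕ} (hk : k ≤ n) (hn : n < p) :
    (n.choose k : ZMod p) ≠ 0 := by
  have hdvd : n.choose k ∣ n.factorial := ⟨k.factorial * (n - k).factorial, by
    rw [← mul_assoc, Nat.choose_mul_factorial_mul_factorial hk]⟩
  rw [Ne, ZMod.natCast_eq_zero_iff]
  exact fun h ↦ hn.not_ge ((Nat.Prime.dvd_factorial Fact.out).1 (h.trans hdvd))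

theorem pow_dotProduct_pow (a b : ℕ) :
    (fun x : ZMod p ↦ x ^ a) ⬝ᵥ (fun x ↦ x ^ b) = ∑ x : ZMod p, x ^ (a + b) := by
  simp [dotProduct, pow_add]

theorem mem_orthogonalBilin_degLT_iff {k : ℕ} {f : ZMod p → ZMod p} :
    f ∈ (degLT (ZMod p) k).orthogonalBilin (dotProductBilin (ZMod p) (ZMod p)) ↔
      ∀ d < k, (fun x : ZMod p ↦ x ^ d) ⬝ᵥ f = 0 := by
  refine ⟨fun hf d hd ↦ hf _ (pow_mem_degLT hd), fun hf ↦ ?_⟩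
  have : degLT (ZMod p) k ≤ LinearMap.ker ((dotProductBilin (ZMod p) (ZMod p)).flip f) :=
    Submodule.span_le.2 (by rintro _ ⟨d, hd, rfl⟩; simpa using hf d hd)
  exact fun g hg ↦ this hg

theorem degLT_le_orthogonalBilin_degLT {k l : ℕ} (h : k + l ≤ p) :
    degLT (ZMod p) l ≤
      (degLT (ZMod p) k).orthogonalBilin (dotProductBilin (ZMod p) (ZMod p)) :=
  Submodule.span_le.2 <| by
    rintro _ ⟨e, he, rfl⟩
    refine mem_orthogonalBilin_degLT_iff.2 fun d hd ↦ ?_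
    rw [Set.mem_Iio] at he
    rw [pow_dotProduct_pow]
    exact FiniteField.sum_pow_lt_card_sub_one (K := ZMod p) _ (by rw [ZMod.card]; omega)

theorem degLT_card : degLT (ZMod p) p = ⊤ := by
  have hp := (Fact.out : p.Prime).one_lt
  refine eq_top_iff.2 fun f _ ↦ ?_
  have hδ (y : ZMod p) : 1 - (id - y • 1) ^ (p - 1) ∈ degLT (ZMod p) p := by
    have hlin : id - y • 1 ∈ degLT (ZMod p) 2 := by
      rw [degLT_two_eq_span]
      exact sub_mem (Submodule.subset_span (by simp))
        (Submodule.smul_mem _ y (Submodule.subset_span (by simp)))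
    refine sub_mem (one_mem_degLT (by omega)) ?_
    simpa [show p - 1 + 1 = p by omega] using pow_mem_degLT_of_mem_degLT_two hlin (p - 1)
  have : f = ∑ y, f y • (1 - (id - y • 1) ^ (p - 1)) := by
    funext x
    rw [Finset.sum_apply, sum_eq_single x]
    · simp [zero_pow (by omega : p - 1 ≠ 0)]
    · intro y _ hyx
      simp [ZMod.pow_card_sub_one_eq_one (sub_ne_zero.2 (Ne.symm hyx))]
    · simp
  rw [this]
  exact Submodule.sum_mem _ fun y _ ↦ Submodule.smul_mem _ _ (hδ y)

theorem mem_degLT_of_dotProduct_eq_zero {n : ℕ} (hn : n < p) {f : ZMod p → ZMod p}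
    (hf : f ∈ degLT (ZMod p) (n + 1)) (h : (fun x : ZMod p ↦ x ^ (p - 1 - n)) ⬝ᵥ f = 0) :
    f ∈ degLT (ZMod p) n := by
  rw [degLT_succ, Submodule.mem_sup] at hf
  obtain ⟨_, hc, g, hg, rfl⟩ := hf
  obtain ⟨c, rfl⟩ := Submodule.mem_span_singleton.1 hc
  have hg0 : (fun x : ZMod p ↦ x ^ (p - 1 - n)) ⬝ᵥ g = 0 :=
    degLT_le_orthogonalBilin_degLT (k := p - n) (by omega) hg _ (pow_mem_degLT (by omega))
  rw [dotProduct_add, dotProduct_smul, pow_dotProduct_pow, show p - 1 - n + n = p - 1 by omega,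
    ZMod.sum_pow_card_sub_one, hg0, smul_eq_mul, mul_neg_one, add_zero, neg_eq_zero] at h
  simpa [h] using hg

theorem orthogonalBilin_degLT {k : ℕ} (hk : k ≤ p) :
    (degLT (ZMod p) k).orthogonalBilin (dotProductBilin (ZMod p) (ZMod p)) =
      degLT (ZMod p) (p - k) := by
  refine le_antisymm (fun f hf ↦ ?_) (degLT_le_orthogonalBilin_degLT (by omega))
  suffices ∀ j ≤ k, f ∈ degLT (ZMod p) (p - j) from this k le_rfl
  intro j hj
  induction j with
  | zero => simp [degLT_card]
  | succ j ih =>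
    refine mem_degLT_of_dotProduct_eq_zero (by omega) ?_ ?_
    · rw [show p - (j + 1) + 1 = p - j by omega]
      exact ih (by omega)
    · rw [show p - 1 - (p - (j + 1)) = j by omega]
      exact mem_orthogonalBilin_degLT_iff.1 hf j (by omega)

theorem map_circulantLaplacian_degLT {T : Finset (ZMod p)} {m n : ℕ} (hm : 0 < m)
    (hT : ∀ j, 0 < j → j < m → ∑ s ∈ T, s ^ j = 0) (hTm : ∑ s ∈ T, s ^ m ≠ 0) (hmn : m ≤ n)
    (hn : n ≤ p) :
    (degLT (ZMod p) n).map (circulantLaplacian (ZMod p) T) = degLT (ZMod p) (n - m) := by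
  refine le_antisymm ?_ ?_
  · rw [degLT, Submodule.map_span, Submodule.span_le]
    rintro _ ⟨_, ⟨d, hd, rfl⟩, rfl⟩
    rw [Set.mem_Iio] at hd
    exact degLT_mono (by omega) (circulantLaplacian_pow_mem_degLT hT d)
  suffices ∀ c ≤ n - m,
      degLT (ZMod p) c ≤ (degLT (ZMod p) n).map (circulantLaplacian (ZMod p) T) from
    this _ le_rfl
  intro c hc
  induction c with
  | zero => simp [degLT]
  | succ c ih =>
    rw [degLT_succ, sup_le_iff, Submodule.span_singleton_le_iff_mem]
    refine ⟨?_, ih (by omega)⟩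
    set a : ZMod p := ((c + m).choose c : ZMod p) * ∑ s ∈ T, s ^ m
    have ha : a ≠ 0 := mul_ne_zero (ZMod.natCast_choose_ne_zero (by omega) (by omega)) hTm
    have hB := Submodule.mem_map_of_mem (f := circulantLaplacian (ZMod p) T)
      (pow_mem_degLT (R := ZMod p) (show c + m < n by omega))
    have := Submodule.smul_mem _ a⁻¹
      (sub_mem hB (ih (by omega) (circulantLaplacian_pow_add_sub_mem_degLT hT hm c)))
    rwa [sub_sub_cancel, smul_smul, inv_mul_cancel₀ ha, one_smul] at this

end PolynomialFunctionsModP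

section PowerSums

variable {p : ℕ} [Fact p.Prime]

theorem ZMod.eq_zero_or_eq_one_of_sum_eq_zero {α : Type*} [Fintype α] (hα : Fintype.card α = p)
    {v : α → ZMod p} (hv : ∀ x, v x = 0 ∨ v x = 1) (hsum : ∑ x, v x = 0) : v = 0 ∨ v = 1 := by
  classical
  set A := univ.filter fun x ↦ v x = 1
  have hA : (#A : ZMod p) = 0 := by
    rw [← hsum, ← sum_boole]
    exact sum_congr rfl fun x _ ↦ by rcases hv x with h | h <;> simp [h]
  obtain ⟨t, ht⟩ := (ZMod.natCast_eq_zero_iff _ _).1 hA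
  have ht1 : t ≤ 1 :=
    Nat.le_of_mul_le_mul_left (by rw [mul_one, ← ht, ← hα]; exact card_filter_le _ _)
      (Fact.out : p.Prime).pos
  interval_cases t
  · left
    funext x
    have hx : x ∉ A := by simp [card_eq_zero.1 (by simpa using ht)]
    exact (hv x).resolve_right (by simpa [A] using hx)
  · right
    funext x
    have hx : x ∈ A := eq_univ_of_card A (by rw [ht, mul_one, hα]) ▸ mem_univ x
    simpa [A] using hx

theorem apply_zero_eq_zero_of_mem_degLT {f : ZMod p → ZMod p}
    (hf : f ∈ degLT (ZMod p) (p - 1)) (hf0 : ∀ x ≠ 0, f x = 0) : f 0 = 0 := by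
  have hp := (Fact.out : p.Prime).pos
  have h := degLT_le_orthogonalBilin_degLT (k := 1) (by omega) hf _
    (pow_mem_degLT (R := ZMod p) one_pos)
  rwa [dotProductBilin_apply_apply, dotProduct,
    sum_eq_single 0 (fun x _ hx ↦ by simp [hf0 x hx]) (by simp), pow_zero, one_mul] at h

theorem eq_zero_or_eq_one_of_mem_degLT {v : ZMod p → ZMod p} {n : ℕ}
    (hv : v ∈ degLT (ZMod p) n) (hn0 : 0 < n) (hn : n + n ≤ p)
    (h : ∀ x ≠ 0, v x = 0 ∨ v x = 1) (x : ZMod p) : v x = 0 ∨ v x = 1 := by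
  by_cases hx : x = 0
  · have hw : v * (v - 1) ∈ degLT (ZMod p) (n + n - 1) := by
      rw [← degLT_mul_degLT hn0 hn0]
      exact Submodule.mul_mem_mul hv (sub_mem hv (one_mem_degLT hn0))
    have := apply_zero_eq_zero_of_mem_degLT (degLT_mono (by omega) hw) fun y hy ↦ by
      rcases h y hy with h | h <;> simp [h]
    simpa [hx, sub_eq_zero] using this
  · exact h x hx

/-- Off `0` this is the indicator of `T`; subtracting `#T` times the indicator `1 - x ^ (p - 1)`
of `0` makes it orthogonal to the constants as well. -/
theorem indicator_sub_mem_degLT {T : Finset (ZMod p)} {n : ℕ} (hn : n < p)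
    (hT : ∀ j, 0 < j → j ≤ n → ∑ s ∈ T, s ^ j = 0) :
    (fun x ↦ if x ∈ T then 1 else 0) - (#T : ZMod p) • (1 - fun x ↦ x ^ (p - 1)) ∈
      degLT (ZMod p) (p - 1 - n) := by
  have hp := (Fact.out : p.Prime).two_le
  rw [show p - 1 - n = p - (n + 1) by omega, ← orthogonalBilin_degLT (by omega),
    mem_orthogonalBilin_degLT_iff]
  intro d hd
  have hind : (fun x : ZMod p ↦ x ^ d) ⬝ᵥ (fun x ↦ if x ∈ T then 1 else 0) =
      ∑ s ∈ T, s ^ d := by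
    simp [dotProduct]
  rw [dotProduct_sub, dotProduct_smul, dotProduct_sub, hind, pow_dotProduct_pow]
  rcases Nat.eq_zero_or_pos d with rfl | hd0
  · simp [dotProduct, ZMod.sum_pow_card_sub_one]
  · have h1 : (fun x : ZMod p ↦ x ^ d) ⬝ᵥ 1 = ∑ x : ZMod p, x ^ (d + (p - 1)) := by
      refine sum_congr rfl fun x _ ↦ ?_
      rw [show d + (p - 1) = d - 1 + p by omega, pow_add, ZMod.pow_card, ← pow_succ,
        Nat.sub_add_cancel hd0, Pi.one_apply, mul_one]
    simp [h1, hT d hd0 (by omega)]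

theorem eq_empty_or_eq_erase_zero_of_sum_pow_eq_zero {T : Finset (ZMod p)} (h0 : 0 ∉ T)
    (hT : ∀ j, 0 < j → j ≤ (p - 1) / 2 → ∑ s ∈ T, s ^ j = 0) : T = ∅ ∨ T = univ.erase 0 := by
  have hp := (Fact.out : p.Prime).two_le
  have hT0 : T ⊆ univ.erase 0 := fun x hx ↦ mem_erase.2 ⟨ne_of_mem_of_not_mem hx h0, mem_univ x⟩
  rcases (Fact.out : p.Prime).eq_two_or_odd with rfl | hodd
  · have h : univ.erase (0 : ZMod 2) = {1} := rfl
    rw [h, ← subset_singleton_iff, ← h]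
    exact hT0
  set c : ZMod p → ZMod p := fun x ↦ if x ∈ T then 1 else 0
  set v := c - (#T : ZMod p) • (1 - fun x ↦ x ^ (p - 1))
  have hvc (x : ZMod p) (hx : x ≠ 0) : v x = c x := by
    simp [v, ZMod.pow_card_sub_one_eq_one hx]
  have hc (x : ZMod p) : c x = 0 ∨ c x = 1 := by by_cases hx : x ∈ T <;> simp [c, hx]
  have hv : v ∈ degLT (ZMod p) ((p - 1) / 2) := by
    simpa [show p - 1 - (p - 1) / 2 = (p - 1) / 2 by omega] using
      indicator_sub_mem_degLT (n := (p - 1) / 2) (by omega) hT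
  have hv01 := eq_zero_or_eq_one_of_mem_degLT hv (by omega) (by omega)
    fun x hx ↦ hvc x hx ▸ hc x
  have hsum : ∑ x, v x = 0 := by
    simpa [dotProduct] using degLT_le_orthogonalBilin_degLT (k := 1) (by omega) hv _
      (pow_mem_degLT (R := ZMod p) one_pos)
  rcases ZMod.eq_zero_or_eq_one_of_sum_eq_zero (ZMod.card p) hv01 hsum with h | h
  · refine Or.inl (eq_empty_of_forall_notMem fun x hx ↦ ?_)
    simpa [hvc x (ne_of_mem_of_not_mem hx h0), c, hx] using congr_fun h x
  · refine Or.inr (Subset.antisymm hT0 fun x hx ↦ ?_)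
    by_contra hxT
    simpa [hvc x (ne_of_mem_erase hx), c, hxT] using congr_fun h x

end PowerSums

section Automorphisms

def autGroup {p : ℕ} (X : SimpleGraph (ZMod p)) : Subgroup (Equiv.Perm (ZMod p)) where
  carrier := {σ | IsCircAut X σ}
  mul_mem' hσ hτ i j := (hσ _ _).trans (hτ i j)
  one_mem' _ _ := Iff.rfl
  inv_mem' {σ} hσ i j := by simpa using (hσ (σ⁻¹ i) (σ⁻¹ j)).symm

theorem mem_autGroup {p : ℕ} {X : SimpleGraph (ZMod p)} {σ : Equiv.Perm (ZMod p)} :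
    σ ∈ autGroup X ↔ IsCircAut X σ :=
  Iff.rfl

variable {p : ℕ} [Fact p.Prime] {X : SimpleGraph (ZMod p)} {T : Finset (ZMod p)}
  (hT : ∀ i j, X.Adj i j ↔ j - i ∈ T)
include hT

theorem exists_minimal_sum_pow_ne_zero (hne : T.Nonempty) (hT' : T ≠ univ.erase 0) :
    ∃ m, 0 < m ∧ 2 * m < p ∧ ∑ s ∈ T, s ^ m ≠ 0 ∧
      ∀ j, 0 < j → j < m → ∑ s ∈ T, s ^ j = 0 := by
  have h0 : 0 ∉ T := fun h ↦ X.irrefl ((hT 0 0).2 (by simpa using h))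
  have hex : ∃ m, 0 < m ∧ m ≤ (p - 1) / 2 ∧ ∑ s ∈ T, s ^ m ≠ 0 := by
    by_contra! h
    rcases eq_empty_or_eq_erase_zero_of_sum_pow_eq_zero h0 h with h | h
    · exact hne.ne_empty h
    · exact hT' h
  obtain ⟨hm, hmp, hTm⟩ := Nat.find_spec hex
  refine ⟨Nat.find hex, hm, by omega, hTm, fun j hj hjm ↦ ?_⟩
  by_contra hTj
  exact Nat.find_min hex hjm ⟨hj, by omega, hTj⟩

theorem isPermInvariant_degLT_two {m : ℕ} (hm : 0 < m) (hmp : 2 * m < p)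
    (hTm : ∑ s ∈ T, s ^ m ≠ 0) (hTj : ∀ j, 0 < j → j < m → ∑ s ∈ T, s ^ j = 0) :
    IsPermInvariant (autGroup X) (degLT (ZMod p) 2) := by
  have hB (τ : Equiv.Perm (ZMod p)) (hτ : τ ∈ autGroup X) (f : ZMod p → ZMod p) :
      circulantLaplacian (ZMod p) T (f ∘ τ) = circulantLaplacian (ZMod p) T f ∘ τ :=
    circulantLaplacian_comp (fun x y ↦ by rw [← hT, ← hT]; exact mem_autGroup.1 hτ x y) f
  have hVp : IsPermInvariant (autGroup X) (degLT (ZMod p) p) :=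
    degLT_card (p := p) ▸ fun _ _ _ _ ↦ Submodule.mem_top
  have hVpm : IsPermInvariant (autGroup X) (degLT (ZMod p) (p - m)) :=
    map_circulantLaplacian_degLT hm hTj hTm (by omega) le_rfl ▸ hVp.map hB
  have hVm : IsPermInvariant (autGroup X) (degLT (ZMod p) m) := by
    simpa [orthogonalBilin_degLT, show p - (p - m) = m by omega] using hVpm.orthogonalBilin
  have hVp2m : IsPermInvariant (autGroup X) (degLT (ZMod p) (p - m - m)) :=
    map_circulantLaplacian_degLT (n := p - m) hm hTj hTm (by omega) (by omega) ▸ hVpm.map hB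
  have hVp2 : IsPermInvariant (autGroup X) (degLT (ZMod p) (p - 2)) := by
    have := hVm.mul (hVm.mul hVp2m)
    rwa [degLT_mul_degLT (by omega) (by omega), degLT_mul_degLT (by omega) (by omega),
      show m + (m + (p - m - m) - 1) - 1 = p - 2 by omega] at this
  simpa [orthogonalBilin_degLT, show p - (p - 2) = 2 by omega] using hVp2.orthogonalBilin

theorem exists_eq_mul_of_mem_autGroup (hne : T.Nonempty) (hT' : T ≠ univ.erase 0)
    {σ : Equiv.Perm (ZMod p)} (hσ : σ ∈ autGroup X) (hσ0 : σ 0 = 0) :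
    ∃ a : (ZMod p)ˣ, ∀ x, σ x = a * x := by
  obtain ⟨m, hm, hmp, hTm, hTj⟩ := exists_minimal_sum_pow_ne_zero hT hne hT'
  have hid : id ∈ degLT (ZMod p) 2 := by
    rw [degLT_two_eq_span]
    exact Submodule.subset_span (by simp)
  have := isPermInvariant_degLT_two hT hm hmp hTm hTj σ hσ id hid
  rw [degLT_two_eq_span, Submodule.mem_span_pair] at this
  obtain ⟨b, a, hba⟩ := this
  have hσx (x : ZMod p) : σ x = b + a * x := by simpa using (congr_fun hba x).symm
  have hb : b = 0 := by simpa [hσ0] using (hσx 0).symm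
  have ha : a ≠ 0 := fun ha ↦ one_ne_zero (σ.injective (by rw [hσx, hσ0, ha, hb]; simp))
  exact ⟨Units.mk0 a ha, fun x ↦ by simp [hσx, hb]⟩

end Automorphisms

theorem Units.image_mul_left_eq_iff {M : Type*} [Monoid M] (a : Mˣ) (S : Set M) :
    (fun s ↦ (a : M) * s) '' S = S ↔ ∀ t, (a : M) * t ∈ S ↔ t ∈ S := by
  refine ⟨fun h t ↦ ?_, fun h ↦ ?_⟩
  · nth_rewrite 1 [← h]
    exact a.isUnit.mul_right_injective.mem_set_image
  · conv_rhs => rw [← (Units.mulLeft a).surjective.image_preimage S]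
    exact congrArg _ (Set.ext h).symm

section Phi

variable {p : ℕ} [Fact p.Prime]

theorem Phi_apply (i : ZMod p) (a : (ZMod p)ˣ) (x : ZMod p) :
    Phi i a x = i + (a : ZMod p) * (x - i) :=
  rfl

theorem Phi_mul (i : ZMod p) (a b : (ZMod p)ˣ) : Phi i (a * b) = Phi i a * Phi i b := by
  ext x
  simp only [Equiv.Perm.mul_apply, Phi_apply, Units.val_mul]
  ring

theorem Phi_injective (i : ZMod p) : Function.Injective (Phi i) := fun a b h ↦ by
  simpa [Phi_apply, Units.ext_iff] using congr($h (i + 1))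

variable {X : SimpleGraph (ZMod p)} {S : Set (ZMod p)} (hS : ∀ i j, X.Adj i j ↔ j - i ∈ S)
include hS

theorem addLeft_mem_autGroup (i : ZMod p) : Equiv.addLeft i ∈ autGroup X := fun x y ↦ by
  simp [hS]

theorem isCircAut_Phi_iff (i : ZMod p) (a : (ZMod p)ˣ) :
    IsCircAut X (Phi i a) ↔ (fun s ↦ (a : ZMod p) * s) '' S = S := by
  rw [Units.image_mul_left_eq_iff]
  have h (x y : ZMod p) : Phi i a y - Phi i a x = a * (y - x) := by
    simp only [Phi_apply]
    ring
  refine ⟨fun ha t ↦ ?_, fun ha x y ↦ ?_⟩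
  · simpa [hS, h] using ha 0 t
  · rw [hS, hS, h, ha]

theorem exists_Phi_eq_of_isCircAut (hne : S.Nonempty) (hnc : S ≠ {x : ZMod p | x ≠ 0})
    (i : ZMod p) {σ : Equiv.Perm (ZMod p)} (hσ : IsCircAut X σ) (hσi : σ i = i) :
    ∃ a : (ZMod p)ˣ, Phi i a = σ := by
  classical
  have hT (x y : ZMod p) : X.Adj x y ↔ y - x ∈ S.toFinset := by rw [Set.mem_toFinset, hS]
  have hT' : S.toFinset ≠ univ.erase 0 := fun h ↦ hnc (by ext x; simpa using congr(x ∈ $h))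
  set σ₀ := (Equiv.addLeft i)⁻¹ * σ * Equiv.addLeft i
  have hσ₀ : σ₀ ∈ autGroup X :=
    mul_mem (mul_mem (inv_mem (addLeft_mem_autGroup hS i)) hσ) (addLeft_mem_autGroup hS i)
  obtain ⟨a, ha⟩ := exists_eq_mul_of_mem_autGroup hT (Set.toFinset_nonempty.2 hne) hT' hσ₀
    (by simp [σ₀, hσi])
  refine ⟨a, Equiv.ext fun x ↦ ?_⟩
  have := ha (x - i)
  simp only [σ₀, Equiv.Perm.mul_apply, Equiv.Perm.inv_def, Equiv.coe_addLeft,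
    add_sub_cancel, Equiv.addLeft_symm_apply] at this
  rw [Phi_apply, ← this]
  ring

end Phi

/-- For a nontrivial circulant `p`-graph `X` and every vertex `i`, the map
`Φ_i : E → Aut_i(X)`, `e ↦ (x ↦ i + e(x − i))`, is a group isomorphism from `E` onto the
stabilizer of `i` in `Aut(X)`: it lands in the stabilizer, is multiplicative, injective on
`E`, and surjects onto the stabilizer. -/
theorem stmt10 {p : ℕ} [Fact p.Prime]
    (X : SimpleGraph (ZMod p)) (S : Set (ZMod p))
    (hS : ∀ i j : ZMod p, X.Adj i j ↔ j - i ∈ S)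
    (hne : S.Nonempty) (hnc : S ≠ {x : ZMod p | x ≠ 0})
    (E : Subgroup (ZMod p)ˣ)
    (hE : ∀ a : (ZMod p)ˣ, a ∈ E ↔ (fun s => (a : ZMod p) * s) '' S = S)
    (i : ZMod p) :
    (∀ (a : (ZMod p)ˣ) (x : ZMod p), Phi i a x = i + (a : ZMod p) * (x - i)) ∧
    (∀ a ∈ E, IsCircAut X (Phi i a) ∧ Phi i a i = i) ∧
    (∀ a ∈ E, ∀ b ∈ E, Phi i (a * b) = Phi i a * Phi i b) ∧
    (∀ a ∈ E, ∀ b ∈ E, Phi i a = Phi i b → a = b) ∧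
    (∀ σ : Equiv.Perm (ZMod p), IsCircAut X σ → σ i = i → ∃ a ∈ E, Phi i a = σ) := by
  refine ⟨Phi_apply i, fun a ha ↦ ⟨(isCircAut_Phi_iff hS i a).2 ((hE a).1 ha), by
    simp [Phi_apply]⟩, fun a _ b _ ↦ Phi_mul i a b, fun a _ b _ h ↦ Phi_injective i h,
    fun σ hσ hσi ↦ ?_⟩
  obtain ⟨a, rfl⟩ := exists_Phi_eq_of_isCircAut hS hne hnc i hσ hσi
  exact ⟨a, (hE a).2 ((isCircAut_Phi_iff hS i a).1 hσ), rfl⟩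
end

section
/- Let X be a nontrivial circulant p-graph of type k. The orbits of the stabilizer Aut_0(X) acting on Z_p are {0} together with the cosets yE = {ye : e ∈ E} for y ∈ Z_p ∖ {0}; in particular every orbit other than {0} has cardinality k, and the total number of orbits equals (p−1)/k + 1. -/
open Polynomial Finset

/-- The orbit of the vertex `j` under the stabilizer `Aut_0(X)` of the vertex `0`. -/
def stabOrbit0 {p : ℕ} (X : SimpleGraph (ZMod p)) (j : ZMod p) : Set (ZMod p) :=
  {k | ∃ σ : Equiv.Perm (ZMod p), IsCircAut X σ ∧ σ 0 = 0 ∧ σ j = k}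


section CircHelpers
variable {p : ℕ} {ζ : ℂ}

noncomputable def ee (ζ : ℂ) {p : ℕ} (x : ZMod p) : ℂ := ζ ^ x.val

lemma pow_mod_p (h1 : ζ ^ p = 1) (n : ℕ) : ζ ^ n = ζ ^ (n % p) := by
  conv_lhs => rw [← Nat.mod_add_div n p]
  rw [pow_add, pow_mul, h1, one_pow, mul_one]

lemma ee_add [NeZero p] (h1 : ζ ^ p = 1) (x y : ZMod p) :
    ee ζ (x + y) = ee ζ x * ee ζ y := by
  rw [ee, ee, ee, ZMod.val_add, ← pow_mod_p h1, pow_add]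

lemma ee_zero [NeZero p] (ζ : ℂ) : ee ζ (0 : ZMod p) = 1 := by
  simp [ee]

/-- linear independence of `1, ζ, ..., ζ^(p-1)` modulo the all-ones relation -/
lemma indep [NeZero p] (hζ : IsPrimitiveRoot ζ p) (hp : p.Prime) (d : ZMod p → ℤ)
    (hsum : ∑ x : ZMod p, d x = 0)
    (h : ∑ x : ZMod p, (d x : ℂ) * ee ζ x = 0) : ∀ x, d x = 0 := by
  classical
  haveI : Fact p.Prime := ⟨hp⟩
  set P : ℚ[X] := ∑ x : ZMod p, C ((d x : ℚ)) * X ^ x.val with hP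
  have hcoeff : ∀ x : ZMod p, P.coeff x.val = (d x : ℚ) := by
    intro x
    rw [hP, finset_sum_coeff]
    rw [Finset.sum_eq_single x]
    · simp
    · intro y _ hyx
      rw [coeff_C_mul, coeff_X_pow, if_neg, mul_zero]
      exact fun hv => hyx (ZMod.val_injective p hv.symm)
    · simp
  have hcoeff' : ∀ n, p ≤ n → P.coeff n = 0 := by
    intro n hn
    rw [hP, finset_sum_coeff]
    apply Finset.sum_eq_zero
    intro y _
    rw [coeff_C_mul, coeff_X_pow, if_neg, mul_zero]
    exact fun hv => absurd (hv ▸ y.val_lt) (by omega)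
  have haeval : aeval ζ P = 0 := by
    rw [hP, map_sum, ← h]
    refine Finset.sum_congr rfl fun x _ => ?_
    simp [ee]
  have hdvd : cyclotomic p ℚ ∣ P := by
    rw [cyclotomic_eq_minpoly_rat hζ hp.pos]
    exact minpoly.dvd ℚ ζ haeval
  obtain ⟨Q, hQ⟩ := hdvd
  by_cases hP0 : P = 0
  · intro x
    have := hcoeff x
    rw [hP0, coeff_zero] at this
    exact_mod_cast this.symm
  · have hQ0 : Q ≠ 0 := by rintro rfl; rw [mul_zero] at hQ; exact hP0 hQ
    have hPdeg : P.natDegree ≤ p - 1 := by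
      rw [natDegree_le_iff_coeff_eq_zero]
      intro N hN
      exact hcoeff' N (by omega)
    have hdegs : P.natDegree = (p - 1) + Q.natDegree := by
      rw [hQ, natDegree_mul (cyclotomic_ne_zero p ℚ) hQ0, natDegree_cyclotomic,
        Nat.totient_prime hp]
    have hQdeg : Q.natDegree = 0 := by omega
    obtain ⟨c, rfl⟩ : ∃ c, Q = C c := ⟨Q.coeff 0, eq_C_of_natDegree_eq_zero hQdeg⟩
    have hdx : ∀ x : ZMod p, (d x : ℚ) = c := by
      intro x
      rw [← hcoeff x, hQ, coeff_mul_C, cyclotomic_prime, finset_sum_coeff]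
      rw [Finset.sum_eq_single x.val]
      · simp
      · intro b _ hb; rw [coeff_X_pow, if_neg (Ne.symm hb)]
      · intro hx; exact absurd (Finset.mem_range.2 x.val_lt) hx
    have hc : (p : ℚ) * c = 0 := by
      have : ∑ x : ZMod p, (d x : ℚ) = 0 := by exact_mod_cast congrArg (Int.cast : ℤ → ℚ) hsum
      rw [Finset.sum_congr rfl (fun x _ => hdx x), Finset.sum_const, Finset.card_univ,
        ZMod.card, nsmul_eq_mul] at this
      exact this
    have hc0 : c = 0 := by
      have hpne : (p : ℚ) ≠ 0 := by exact_mod_cast hp.ne_zero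
      exact (mul_eq_zero.1 hc).resolve_left hpne
    intro x
    exact_mod_cast (hdx x).trans hc0

/-- equal sums of `ζ`-powers over equal-size sets force set equality -/
lemma sum_ee_inj [NeZero p] (hζ : IsPrimitiveRoot ζ p) (hp : p.Prime)
    {A B : Finset (ZMod p)} (hcard : A.card = B.card)
    (h : ∑ x ∈ A, ee ζ x = ∑ x ∈ B, ee ζ x) : A = B := by
  classical
  set d : ZMod p → ℤ := fun x => (if x ∈ A then 1 else 0) - (if x ∈ B then 1 else 0) with hd
  have hz : ∀ x, d x = 0 := by
    apply indep hζ hp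
    · rw [Finset.sum_sub_distrib]
      rw [Finset.sum_ite_mem, Finset.sum_ite_mem, Finset.univ_inter, Finset.univ_inter]
      simp [hcard]
    · have : ∀ x : ZMod p, (d x : ℂ) * ee ζ x
          = (if x ∈ A then ee ζ x else 0) - (if x ∈ B then ee ζ x else 0) := by
        intro x
        rw [hd]
        push_cast
        by_cases hA : x ∈ A <;> by_cases hB : x ∈ B <;> simp [hA, hB]
      rw [Finset.sum_congr rfl (fun x _ => this x), Finset.sum_sub_distrib,
        Finset.sum_ite_mem, Finset.sum_ite_mem, Finset.univ_inter, Finset.univ_inter, h,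
        sub_self]
  ext x
  have := hz x
  rw [hd] at this
  by_cases hA : x ∈ A <;> by_cases hB : x ∈ B <;> simp_all

/-- a family annihilated by all power sums vanishes on level sets -/
lemma powersum {ι : Type*} [Fintype ι] (lam c : ι → ℂ)
    (h : ∀ m : ℕ, ∑ i, c i * lam i ^ m = 0) (t : ℂ) :
    ∑ i ∈ Finset.univ.filter (fun i => lam i = t), c i = 0 := by
  classical
  have key : ∀ q : ℂ[X], ∑ i, c i * q.eval (lam i) = 0 := by
    intro q
    have : ∀ i, c i * q.eval (lam i)
        = ∑ m ∈ Finset.range (q.natDegree + 1), q.coeff m * (c i * lam i ^ m) := by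
      intro i
      rw [eval_eq_sum_range, Finset.mul_sum]
      exact Finset.sum_congr rfl fun m _ => by ring
    rw [Finset.sum_congr rfl (fun i _ => this i), Finset.sum_comm]
    refine Finset.sum_eq_zero fun m _ => ?_
    rw [← Finset.mul_sum, h m, mul_zero]
  by_cases ht : t ∈ Finset.image lam Finset.univ
  · set q : ℂ[X] := ∏ s ∈ (Finset.image lam Finset.univ).erase t, (X - C s) with hq
    have h0 := key q
    rw [← Finset.sum_filter_add_sum_filter_not Finset.univ (fun i => lam i = t)] at h0
    have h2 : ∑ i ∈ Finset.univ.filter (fun i => ¬ lam i = t), c i * q.eval (lam i) = 0 := by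
      refine Finset.sum_eq_zero fun i hi => ?_
      have hmem : lam i ∈ (Finset.image lam Finset.univ).erase t := by
        rw [Finset.mem_erase]
        exact ⟨(Finset.mem_filter.1 hi).2, Finset.mem_image_of_mem lam (Finset.mem_univ i)⟩
      rw [hq, eval_prod]
      rw [Finset.prod_eq_zero hmem (by simp), mul_zero]
    rw [h2, add_zero] at h0
    have h3 : ∑ i ∈ Finset.univ.filter (fun i => lam i = t), c i * q.eval (lam i)
        = (∑ i ∈ Finset.univ.filter (fun i => lam i = t), c i) * q.eval t := by
      rw [Finset.sum_mul]
      refine Finset.sum_congr rfl fun i hi => ?_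
      rw [(Finset.mem_filter.1 hi).2]
    rw [h3] at h0
    have hqt : q.eval t ≠ 0 := by
      rw [hq, eval_prod]
      refine Finset.prod_ne_zero_iff.2 fun s hs => ?_
      have : s ≠ t := (Finset.mem_erase.1 hs).1
      simp [sub_eq_zero, this.symm]
    exact (mul_eq_zero.1 h0).resolve_right hqt
  · rw [Finset.filter_eq_empty_iff.2, Finset.sum_empty]
    intro i _
    exact fun he => ht (he ▸ Finset.mem_image_of_mem lam (Finset.mem_univ i))
end CircHelpers

lemma key_orbit {p : ℕ} [hp : Fact p.Prime]
    (X : SimpleGraph (ZMod p)) (S : Set (ZMod p))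
    (hS : ∀ i j : ZMod p, X.Adj i j ↔ j - i ∈ S)
    (hne : S.Nonempty)
    (E : Subgroup (ZMod p)ˣ)
    (hE : ∀ a : (ZMod p)ˣ, a ∈ E ↔ (fun s => (a : ZMod p) * s) '' S = S)
    (σ : Equiv.Perm (ZMod p)) (hσ : IsCircAut X σ) (h0 : σ 0 = 0)
    {y : ZMod p} (hy : y ≠ 0) : ∃ a : (ZMod p)ˣ, a ∈ E ∧ σ y = y * (a : ZMod p) := by
  classical
  haveI : NeZero p := ⟨hp.out.ne_zero⟩
  set ζ : ℂ := Complex.exp (2 * Real.pi * Complex.I / p) with hzeta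
  have hζ : IsPrimitiveRoot ζ p := Complex.isPrimitiveRoot_exp p hp.out.ne_zero
  have h1 : ζ ^ p = 1 := hζ.pow_eq_one
  have hSfin : S.Finite := Set.toFinite S
  set S' : Finset (ZMod p) := hSfin.toFinset with hS'def
  have hS' : ∀ x, x ∈ S' ↔ x ∈ S := fun x => hSfin.mem_toFinset
  have hScoe : (↑S' : Set (ZMod p)) = S := hSfin.coe_toFinset
  have h0S : (0 : ZMod p) ∉ S := by
    intro h
    exact X.irrefl ((hS 0 0).2 (by simpa using h))
  set lam : ZMod p → ℂ := fun a => ∑ s ∈ S', ee ζ (a * s) with hlam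
  set A : Matrix (ZMod p) (ZMod p) ℂ := Matrix.of (fun i j => if X.Adj i j then 1 else 0)
    with hA
  -- automorphism invariance of powers
  have hAadj : ∀ w z : ZMod p, A (σ w) (σ z) = A w z := by
    intro w z
    simp only [hA, Matrix.of_apply, hσ w z]
  have hAσ : ∀ (m : ℕ) (x z : ZMod p), (A ^ m) (σ x) (σ z) = (A ^ m) x z := by
    intro m
    induction m with
    | zero =>
      intro x z
      simp [Matrix.one_apply, σ.injective.eq_iff]
    | succ m ih =>
      intro x z
      rw [pow_succ, Matrix.mul_apply, Matrix.mul_apply]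
      refine (Fintype.sum_equiv σ _ _ fun w => ?_).symm
      rw [ih, hAadj]
  -- eigenvector relation
  have hA1 : ∀ (a x : ZMod p), ∑ z : ZMod p, A x z * ee ζ (a * z) = lam a * ee ζ (a * x) := by
    intro a x
    have h2 : ∑ z : ZMod p, A x z * ee ζ (a * z)
        = ∑ s : ZMod p, A x (x + s) * ee ζ (a * (x + s)) :=
      (Fintype.sum_equiv (Equiv.addLeft x) _ _ (fun s => rfl)).symm
    rw [h2]
    have h3 : ∀ s : ZMod p, A x (x + s) * ee ζ (a * (x + s))
        = if s ∈ S' then ee ζ (a * x) * ee ζ (a * s) else 0 := by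
      intro s
      have hadj : X.Adj x (x + s) ↔ s ∈ S' := by
        rw [hS, hS', add_sub_cancel_left]
      have : ee ζ (a * (x + s)) = ee ζ (a * x) * ee ζ (a * s) := by
        rw [mul_add, ee_add h1]
      simp only [hA, Matrix.of_apply, this]
      by_cases hs : s ∈ S' <;> simp [hs, hadj]
    rw [Finset.sum_congr rfl (fun s _ => h3 s), Finset.sum_ite_mem, Finset.univ_inter,
      ← Finset.mul_sum]
    rw [mul_comm]
  have heig : ∀ (m : ℕ) (a x : ZMod p),
      ∑ z : ZMod p, (A ^ m) x z * ee ζ (a * z) = lam a ^ m * ee ζ (a * x) := by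
    intro m
    induction m with
    | zero =>
      intro a x
      simp only [pow_zero, Matrix.one_apply, one_mul]
      rw [Finset.sum_congr rfl (fun z _ => by rw [ite_mul, one_mul, zero_mul]),
        Finset.sum_ite_eq Finset.univ x (fun z => ee ζ (a * z))]
      simp
    | succ m ih =>
      intro a x
      rw [pow_succ']
      calc ∑ z : ZMod p, (A * A ^ m) x z * ee ζ (a * z)
          = ∑ z : ZMod p, ∑ w : ZMod p, A x w * ((A ^ m) w z * ee ζ (a * z)) := by
            refine Finset.sum_congr rfl fun z _ => ?_
            rw [Matrix.mul_apply, Finset.sum_mul]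
            exact Finset.sum_congr rfl fun w _ => by ring
        _ = ∑ w : ZMod p, A x w * ∑ z : ZMod p, (A ^ m) w z * ee ζ (a * z) := by
            rw [Finset.sum_comm]
            exact Finset.sum_congr rfl fun w _ => by rw [Finset.mul_sum]
        _ = ∑ w : ZMod p, A x w * (lam a ^ m * ee ζ (a * w)) := by
            exact Finset.sum_congr rfl fun w _ => by rw [ih a w]
        _ = lam a ^ m * ∑ w : ZMod p, A x w * ee ζ (a * w) := by
            rw [Finset.mul_sum]
            exact Finset.sum_congr rfl fun w _ => by ring
        _ = lam a ^ (m + 1) * ee ζ (a * x) := by rw [hA1 a x]; ring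
  -- orthogonality
  have horth : ∀ u : ZMod p, ∑ a : ZMod p, ee ζ (a * u) = if u = 0 then (p : ℂ) else 0 := by
    intro u
    by_cases hu : u = 0
    · subst hu
      rw [if_pos rfl]
      simp [ee_zero, Finset.card_univ, ZMod.card]
    · rw [if_neg hu]
      have hre : ∑ a : ZMod p, ee ζ (a * u) = ∑ b : ZMod p, ee ζ b :=
        Fintype.sum_equiv (Equiv.mulRight₀ u hu) _ _ (fun a => rfl)
      rw [hre]
      have hrange : ∑ b : ZMod p, ee ζ b = ∑ j ∈ Finset.range p, ζ ^ j := by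
        refine Finset.sum_bij (fun b _ => b.val) ?_ ?_ ?_ ?_
        · intro b _; exact Finset.mem_range.2 b.val_lt
        · intro a _ b _ h; exact ZMod.val_injective p h
        · intro j hj
          exact ⟨(j : ZMod p), Finset.mem_univ _, ZMod.val_cast_of_lt (Finset.mem_range.1 hj)⟩
        · intro b _; rfl
      rw [hrange, hζ.geom_sum_eq_zero hp.out.one_lt]
  -- Fourier inversion
  have hfour : ∀ (m : ℕ) (w : ZMod p),
      ∑ a : ZMod p, lam a ^ m * ee ζ (a * (-w)) = p * (A ^ m) 0 w := by
    intro m w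
    calc ∑ a : ZMod p, lam a ^ m * ee ζ (a * (-w))
        = ∑ a : ZMod p, ∑ z : ZMod p, (A ^ m) 0 z * ee ζ (a * (z - w)) := by
          refine Finset.sum_congr rfl fun a _ => ?_
          have h00 : lam a ^ m = ∑ z : ZMod p, (A ^ m) 0 z * ee ζ (a * z) := by
            rw [heig m a 0, mul_zero, ee_zero, mul_one]
          rw [h00, Finset.sum_mul]
          refine Finset.sum_congr rfl fun z _ => ?_
          rw [mul_assoc, ← ee_add h1]
          congr 2
          ring
      _ = ∑ z : ZMod p, (A ^ m) 0 z * ∑ a : ZMod p, ee ζ (a * (z - w)) := by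
          rw [Finset.sum_comm]
          exact Finset.sum_congr rfl fun z _ => by rw [Finset.mul_sum]
      _ = ∑ z : ZMod p, (A ^ m) 0 z * (if z = w then (p : ℂ) else 0) := by
          refine Finset.sum_congr rfl fun z _ => ?_
          rw [horth (z - w)]
          congr 1
          simp [sub_eq_zero]
      _ = p * (A ^ m) 0 w := by
          rw [Finset.sum_congr rfl (fun z _ => ?_), Finset.sum_ite_eq' Finset.univ w
            (fun z => (A ^ m) 0 z * p)]
          · simp [mul_comm]
          · by_cases hz : z = w <;> simp [hz]
  -- the key power sum identity
  have hσy : σ y ≠ 0 := by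
    intro h
    exact hy (σ.injective (h.trans h0.symm))
  have hvan : ∀ m : ℕ,
      ∑ a : ZMod p, (ee ζ (a * (-y)) - ee ζ (a * (-σ y))) * lam a ^ m = 0 := by
    intro m
    have h3 : (A ^ m) 0 (σ y) = (A ^ m) 0 y := by
      have := hAσ m 0 y
      rwa [h0] at this
    have e1 := hfour m y
    have e2 := hfour m (σ y)
    rw [h3] at e2
    calc ∑ a : ZMod p, (ee ζ (a * (-y)) - ee ζ (a * (-σ y))) * lam a ^ m
        = (∑ a : ZMod p, lam a ^ m * ee ζ (a * (-y)))
          - ∑ a : ZMod p, lam a ^ m * ee ζ (a * (-σ y)) := by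
          rw [← Finset.sum_sub_distrib]
          exact Finset.sum_congr rfl fun a _ => by ring
      _ = 0 := by rw [e1, e2, sub_self]
  have hfilter := powersum lam (fun a => ee ζ (a * (-y)) - ee ζ (a * (-σ y))) hvan (lam 1)
  -- identify the level set with E
  have hlam1 : lam 1 = ∑ x ∈ S', ee ζ x := by
    rw [hlam]
    exact Finset.sum_congr rfl fun s _ => by rw [one_mul]
  have hlam_ne : ∀ a : ZMod p, a ≠ 0 → lam a = ∑ x ∈ S'.image (fun s => a * s), ee ζ x := by
    intro a ha
    rw [Finset.sum_image (fun x _ y _ h => mul_left_cancel₀ ha h)]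
  have hcard_im : ∀ a : ZMod p, a ≠ 0 → (S'.image (fun s => a * s)).card = S'.card :=
    fun a ha => Finset.card_image_of_injective _ (mul_right_injective₀ ha)
  have hset : ∀ a : ZMod p, a ≠ 0 →
      (S'.image (fun s => a * s) = S' ↔ (fun s => a * s) '' S = S) := by
    intro a ha
    constructor
    · intro h
      have := congrArg (fun t : Finset (ZMod p) => (↑t : Set (ZMod p))) h
      simpa [Finset.coe_image, hScoe] using this
    · intro h
      apply Finset.coe_injective
      rw [Finset.coe_image, hScoe, h]
  have hlam0 : lam 0 = (S'.card : ℂ) := by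
    rw [hlam]
    simp [ee_zero]
  have h0S' : (0 : ZMod p) ∉ S' := fun h => h0S ((hS' 0).1 h)
  have hlam01 : lam 0 ≠ lam 1 := by
    intro hc
    set d : ZMod p → ℤ := fun x => (if x ∈ S' then 1 else 0) - (if x = 0 then (S'.card : ℤ) else 0)
      with hd
    have hz := indep hζ hp.out d ?_ ?_
    · obtain ⟨s₀, hs₀⟩ := hne
      have hs₀' : s₀ ∈ S' := (hS' s₀).2 hs₀
      have hs₀0 : s₀ ≠ 0 := fun h => h0S (h ▸ hs₀)
      have := hz s₀
      rw [hd] at this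
      simp [hs₀', hs₀0] at this
    · rw [hd, Finset.sum_sub_distrib, Finset.sum_ite_mem, Finset.univ_inter,
        Finset.sum_ite_eq' Finset.univ (0 : ZMod p) (fun _ => (S'.card : ℤ))]
      simp
    · have : ∀ x : ZMod p, ((d x : ℂ)) * ee ζ x
          = (if x ∈ S' then ee ζ x else 0) - (if x = 0 then (S'.card : ℂ) * ee ζ x else 0) := by
        intro x
        rw [hd]
        push_cast
        by_cases h1x : x ∈ S' <;> by_cases h2x : x = 0 <;>
          simp [h1x, h2x, h0S'] <;> first | ring | (subst h2x; simp [h0S'])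
      rw [Finset.sum_congr rfl (fun x _ => this x), Finset.sum_sub_distrib,
        Finset.sum_ite_mem, Finset.univ_inter,
        Finset.sum_ite_eq' Finset.univ (0 : ZMod p) (fun x => (S'.card : ℂ) * ee ζ x)]
      rw [← hlam1]
      simp [ee_zero, ← hlam0, hc]
  have hEfin : Finset.univ.filter (fun a : ZMod p => lam a = lam 1)
      = Finset.image (fun u : (ZMod p)ˣ => (u : ZMod p)) (Finset.univ.filter (· ∈ E)) := by
    ext a
    simp only [Finset.mem_filter, Finset.mem_univ, true_and, Finset.mem_image]
    constructor
    · intro hla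
      have ha : a ≠ 0 := by
        rintro rfl
        exact hlam01 hla
      have him : S'.image (fun s => a * s) = S' := by
        refine sum_ee_inj hζ hp.out (by rw [hcard_im a ha]) ?_
        rw [← hlam_ne a ha, hla, hlam1]
      exact ⟨Units.mk0 a ha, (hE _).2 ((hset a ha).1 him), rfl⟩
    · rintro ⟨u, hu, rfl⟩
      have ha : (u : ZMod p) ≠ 0 := u.ne_zero
      have him := (hset _ ha).2 ((hE u).1 hu)
      rw [hlam_ne _ ha, him, hlam1]
  rw [hEfin] at hfilter
  set Efin := Finset.image (fun u : (ZMod p)ˣ => (u : ZMod p)) (Finset.univ.filter (· ∈ E))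
    with hEfdef
  have hsums : ∑ a ∈ Efin, ee ζ (a * (-y)) = ∑ a ∈ Efin, ee ζ (a * (-σ y)) :=
    sub_eq_zero.1 ((Finset.sum_sub_distrib (s := Efin) (f := fun a => ee ζ (a * (-y)))
      (g := fun a => ee ζ (a * (-σ y)))).symm.trans hfilter)
  have hinjy : Function.Injective (fun a : ZMod p => a * (-y)) :=
    mul_left_injective₀ (neg_ne_zero.2 hy)
  have hinjσ : Function.Injective (fun a : ZMod p => a * (-σ y)) :=
    mul_left_injective₀ (neg_ne_zero.2 hσy)
  have hAB : Efin.image (fun a => a * (-y)) = Efin.image (fun a => a * (-σ y)) := by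
    refine sum_ee_inj hζ hp.out ?_ ?_
    · rw [Finset.card_image_of_injective _ hinjy, Finset.card_image_of_injective _ hinjσ]
    · rw [Finset.sum_image (fun x _ z _ h => hinjy h),
        Finset.sum_image (fun x _ z _ h => hinjσ h), hsums]
  have h1E : (1 : ZMod p) ∈ Efin := by
    rw [hEfdef]
    exact Finset.mem_image.2 ⟨1, Finset.mem_filter.2 ⟨Finset.mem_univ _, one_mem E⟩, rfl⟩
  have : -σ y ∈ Efin.image (fun a => a * (-y)) := by
    rw [hAB]
    exact Finset.mem_image.2 ⟨1, h1E, by rw [one_mul]⟩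
  obtain ⟨a, haE, hay⟩ := Finset.mem_image.1 this
  obtain ⟨u, hu, rfl⟩ := Finset.mem_image.1 haE
  refine ⟨u, (Finset.mem_filter.1 hu).2, ?_⟩
  have : (u : ZMod p) * y = σ y := by
    have := hay
    rw [mul_neg] at this
    exact neg_injective this
  rw [← this, mul_comm]

lemma mul_aut {p : ℕ} [hp : Fact p.Prime]
    (X : SimpleGraph (ZMod p)) (S : Set (ZMod p))
    (hS : ∀ i j : ZMod p, X.Adj i j ↔ j - i ∈ S)
    (E : Subgroup (ZMod p)ˣ)
    (hE : ∀ a : (ZMod p)ˣ, a ∈ E ↔ (fun s => (a : ZMod p) * s) '' S = S)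
    (u : (ZMod p)ˣ) (hu : u ∈ E) :
    ∃ σ : Equiv.Perm (ZMod p), IsCircAut X σ ∧ σ 0 = 0 ∧ ∀ y, σ y = (u : ZMod p) * y := by
  refine ⟨Equiv.mulLeft₀ (u : ZMod p) u.ne_zero, ?_, ?_, fun y => rfl⟩
  · intro i j
    have hmem : ∀ t : ZMod p, (u : ZMod p) * t ∈ S ↔ t ∈ S := by
      intro t
      constructor
      · intro h
        rw [← (hE u).1 hu] at h
        obtain ⟨s, hs, hst⟩ := h
        rwa [← mul_left_cancel₀ u.ne_zero hst]
      · intro h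
        rw [← (hE u).1 hu]
        exact ⟨t, h, rfl⟩
    show X.Adj ((u : ZMod p) * i) ((u : ZMod p) * j) ↔ X.Adj i j
    rw [hS, hS, ← mul_sub, hmem]
  · show (u : ZMod p) * 0 = 0
    rw [mul_zero]

/-- For a nontrivial circulant `p`-graph `X` of type `k = |E|`, the orbits of the
stabilizer `Aut_0(X)` on `Z_p` are `{0}` together with the cosets `yE` for `y ≠ 0`;
every orbit other than `{0}` has cardinality `k`, and the total number of orbits is
`(p−1)/k + 1`. -/
theorem stmt11 {p : ℕ} [Fact p.Prime]
    (X : SimpleGraph (ZMod p)) (S : Set (ZMod p))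
    (hS : ∀ i j : ZMod p, X.Adj i j ↔ j - i ∈ S)
    (hne : S.Nonempty) (hnc : S ≠ {x : ZMod p | x ≠ 0})
    (E : Subgroup (ZMod p)ˣ)
    (hE : ∀ a : (ZMod p)ˣ, a ∈ E ↔ (fun s => (a : ZMod p) * s) '' S = S)
    (k : ℕ) (hk : k = Nat.card E) :
    stabOrbit0 X 0 = {0} ∧
    (∀ y : ZMod p, y ≠ 0 →
      stabOrbit0 X y = (fun a : (ZMod p)ˣ => y * (a : ZMod p)) '' (E : Set (ZMod p)ˣ)) ∧
    (∀ y : ZMod p, y ≠ 0 → (stabOrbit0 X y).ncard = k) ∧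
    (Set.range (stabOrbit0 X)).ncard = (p - 1) / k + 1 := by
  classical
  haveI : NeZero p := ⟨(Fact.out : p.Prime).ne_zero⟩
  have hid : ∀ j : ZMod p, j ∈ stabOrbit0 X j := by
    intro j
    exact ⟨Equiv.refl _, fun i j => Iff.rfl, rfl, rfl⟩
  have part1 : stabOrbit0 X 0 = {0} := by
    ext z
    constructor
    · rintro ⟨σ, hσ, h0, rfl⟩
      exact h0
    · rintro rfl
      exact hid 0
  have part2 : ∀ y : ZMod p, y ≠ 0 →
      stabOrbit0 X y = (fun a : (ZMod p)ˣ => y * (a : ZMod p)) '' (E : Set (ZMod p)ˣ) := by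
    intro y hy
    ext z
    constructor
    · rintro ⟨σ, hσ, h0, rfl⟩
      obtain ⟨a, haE, hay⟩ := key_orbit X S hS hne E hE σ hσ h0 hy
      exact ⟨a, haE, hay.symm⟩
    · rintro ⟨u, hu, rfl⟩
      obtain ⟨σ, hσ, h0, hσy⟩ := mul_aut X S hS E hE u hu
      exact ⟨σ, hσ, h0, by rw [hσy y, mul_comm]⟩
  have hkpos : 0 < k := by
    rw [hk]
    exact Nat.card_pos
  have part3 : ∀ y : ZMod p, y ≠ 0 → (stabOrbit0 X y).ncard = k := by
    intro y hy
    rw [part2 y hy]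
    have hinj : Function.Injective (fun a : (ZMod p)ˣ => y * (a : ZMod p)) := by
      intro a b h
      exact Units.ext (mul_left_cancel₀ hy h)
    rw [Set.ncard_image_of_injective _ hinj, hk]
    rw [← Nat.card_coe_set_eq]
    simp
  -- part 4
  have hor : ∀ y y' : ZMod p, y ≠ 0 → y' ∈ stabOrbit0 X y → stabOrbit0 X y' = stabOrbit0 X y := by
    intro y y' hy hmem
    rw [part2 y hy] at hmem
    obtain ⟨u, hu, rfl⟩ := hmem
    have hy' : y * (u : ZMod p) ≠ 0 := mul_ne_zero hy u.ne_zero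
    rw [part2 _ hy', part2 y hy]
    ext z
    constructor
    · rintro ⟨v, hv, rfl⟩
      exact ⟨u * v, mul_mem hu hv, by push_cast; ring⟩
    · rintro ⟨v, hv, rfl⟩
      exact ⟨u⁻¹ * v, mul_mem (inv_mem hu) hv, by push_cast; field_simp⟩
  have hrange : Set.range (stabOrbit0 X)
      = insert {0} ((fun y => stabOrbit0 X y) '' {y : ZMod p | y ≠ 0}) := by
    ext T
    constructor
    · rintro ⟨y, rfl⟩
      by_cases hy : y = 0
      · subst hy; exact Set.mem_insert_iff.2 (Or.inl part1)
      · exact Set.mem_insert_iff.2 (Or.inr ⟨y, hy, rfl⟩)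
    · intro hT
      rcases Set.mem_insert_iff.1 hT with h | ⟨y, _, rfl⟩
      · exact ⟨0, h ▸ part1⟩
      · exact ⟨y, rfl⟩
  have hnotmem : ({0} : Set (ZMod p)) ∉ (fun y => stabOrbit0 X y) '' {y : ZMod p | y ≠ 0} := by
    rintro ⟨y, hy, hT⟩
    have h2 : stabOrbit0 X y = {0} := hT
    have h3 := hid y
    rw [h2] at h3
    exact hy h3
  refine ⟨part1, part2, part3, ?_⟩
  rw [hrange, Set.ncard_insert_of_notMem hnotmem (Set.toFinite _)]
  congr 1
  -- count the nonzero orbits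
  have hsetfin : {y : ZMod p | y ≠ 0} = ↑(Finset.univ.erase (0 : ZMod p)) := by
    ext y
    simp [Finset.mem_erase]
  rw [hsetfin, ← Finset.coe_image, Set.ncard_coe_finset]
  set s : Finset (ZMod p) := Finset.univ.erase 0 with hs
  set f : ZMod p → Set (ZMod p) := fun y => stabOrbit0 X y with hf
  have hcard_s : s.card = p - 1 := by
    rw [hs, Finset.card_erase_of_mem (Finset.mem_univ _), Finset.card_univ, ZMod.card]
  have hfib : ∀ y ∈ s, (s.filter (fun z => f z = f y)).card = k := by
    intro y hys
    have hy : y ≠ 0 := (Finset.mem_erase.1 hys).1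
    have : (↑(s.filter (fun z => f z = f y)) : Set (ZMod p)) = stabOrbit0 X y := by
      ext z
      simp only [Finset.coe_filter, Finset.mem_erase, Finset.mem_univ, and_true,
        Set.mem_setOf_eq, hs, hf]
      constructor
      · rintro ⟨hz0, hzy⟩
        rw [← hzy]
        exact hid z
      · intro hz
        have hz0 : z ≠ 0 := by
          rintro rfl
          rw [part2 y hy] at hz
          obtain ⟨u, _, hu⟩ := hz
          exact mul_ne_zero hy u.ne_zero hu
        exact ⟨hz0, hor y z hy hz⟩
    have := congrArg Set.ncard this
    rw [Set.ncard_coe_finset] at this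
    rw [this, part3 y hy]
  have hcount : s.card = (s.image f).card * k := by
    rw [Finset.card_eq_sum_card_image f s]
    rw [Finset.sum_congr rfl (fun b hb => ?_), Finset.sum_const, smul_eq_mul]
    obtain ⟨y, hys, rfl⟩ := Finset.mem_image.1 hb
    exact hfib y hys
  rw [hcard_s] at hcount
  exact (Nat.div_eq_of_eq_mul_left hkpos hcount).symm
end

section
/- Let X be a nontrivial circulant p-graph with adjacency matrix d_X. Then the set of complex p×p matrices commuting with the permutation matrix of every automorphism of X equals the unital subalgebra ℂ[d_X] of M_p(ℂ) consisting of complex polynomials in d_X. In particular, every matrix commuting with all automorphisms of X is a polynomial in d_X. -/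
/-- The permutation matrix `P_σ`, characterized by `P_σ e_i = e_{σ i}`. -/
def permMatrixZ {p : ℕ} (σ : Equiv.Perm (ZMod p)) : Matrix (ZMod p) (ZMod p) ℂ :=
  Matrix.of fun i j => if i = σ j then 1 else 0

open Polynomial Finset Matrix

/-! Translations are automorphisms of `X`, so a matrix `f` commuting with `Aut X` is circulant,
and the character vectors `χₐ = ψ (a * ·)` of `ZMod p` are eigenvectors of `f` and of `d_X`, with
eigenvalues `f̂ a` and `λ a = ∑ s ∈ S, ψ (a * s)`. As `ψ 1, …, ψ (p - 1)` are linearly independent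
over `ℚ`, `λ a = λ b` forces `a • S = b • S`; then `a = m * b` for a multiplier `m` with
`m • S = S`, multiplication by `m` is an automorphism of `X`, and so `f̂ a = f̂ b`. Hence
`f̂ = q ∘ λ` for an interpolating polynomial `q`, and `f = q(d_X)` because both act in the same way
on the basis `(χₐ)`. -/

namespace AddChar

lemma apply_eq_pow_val {M : Type*} [CommMonoid M] {n : ℕ} [NeZero n] (ψ : AddChar (ZMod n) M)
    (k : ZMod n) : ψ k = ψ 1 ^ k.val := by
  rw [← map_nsmul_eq_pow, nsmul_eq_mul, mul_one, ZMod.natCast_zmod_val]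

lemma IsPrimitive.isPrimitiveRoot_apply_one {M : Type*} [CommMonoid M] {p : ℕ} [Fact p.Prime]
    {ψ : AddChar (ZMod p) M} (hψ : ψ.IsPrimitive) : IsPrimitiveRoot (ψ 1) p := by
  rw [IsPrimitiveRoot.iff_orderOf]
  refine orderOf_eq_prime ?_ ?_
  · rw [← map_nsmul_eq_pow, nsmul_eq_mul, mul_one, ZMod.natCast_self, map_zero_eq_one]
  · rw [Ne, hψ.zmod_char_eq_one_iff]
    exact one_ne_zero

namespace IsPrimitive

variable {K : Type*} [Field K] [CharZero K] {p : ℕ} [hp : Fact p.Prime] {ψ : AddChar (ZMod p) K}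

-- With `r = p - 1`, the polynomial `∑ₖ (c k - c r) X ^ k.val` vanishes at `ψ 1` and has degree
-- `< p - 1`, the degree of the minimal polynomial `1 + X + ⋯ + X ^ (p - 1)`; so it is zero.
lemma const_of_sum_mul_eq_zero (hψ : ψ.IsPrimitive) {c : ZMod p → ℚ}
    (h : ∑ k, (c k : K) * ψ k = 0) (k l : ZMod p) : c k = c l := by
  set r : ZMod p := ((p - 1 : ℕ) : ZMod p)
  have hr : r.val = p - 1 := ZMod.val_cast_of_lt (Nat.sub_lt hp.out.pos one_pos)
  set Q : ℚ[X] := ∑ k, C (c k - c r) * X ^ k.val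
  have hcoeff (m : ℕ) : Q.coeff m = ∑ k, if m = k.val then c k - c r else 0 := by
    simp only [Q, finsetSum_coeff, coeff_C_mul_X_pow]
  have hQ : aeval (ψ 1) Q = 0 := by
    have hsum : ∑ k, ψ k = 0 := AddChar.sum_eq_zero_of_ne_one (by simpa using hψ one_ne_zero)
    simp only [Q, map_sum, map_mul, aeval_C, map_pow, aeval_X, ← apply_eq_pow_val, map_sub,
      eq_ratCast, sub_mul, sum_sub_distrib, h, ← mul_sum, hsum, mul_zero, sub_zero]
  have hdeg : Q.degree < (minpoly ℚ (ψ 1)).degree := by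
    rw [← cyclotomic_eq_minpoly_rat hψ.isPrimitiveRoot_apply_one hp.out.pos, degree_cyclotomic,
      Nat.totient_prime hp.out, degree_lt_iff_coeff_zero]
    intro m hm
    rw [hcoeff]
    refine sum_eq_zero fun k _ => ?_
    split_ifs with hmk
    · have : k = r := ZMod.val_injective p (by have := k.val_lt; omega)
      rw [this, sub_self]
    · rfl
  have hQ0 : Q = 0 := by
    by_contra hne
    exact (minpoly.degree_le_of_ne_zero ℚ (ψ 1) hne hQ).not_gt hdeg
  have hc (k : ZMod p) : c k = c r := by
    have := hcoeff k.val
    rw [hQ0, coeff_zero, sum_eq_single_of_mem k (mem_univ k) (fun j _ hj => if_neg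
      fun h => hj (ZMod.val_injective p h.symm)), if_pos rfl] at this
    linarith
  rw [hc k, hc l]

lemma eq_of_sum_mul_eq (hψ : ψ.IsPrimitive) {c d : ZMod p → ℚ} (hsum : ∑ k, c k = ∑ k, d k)
    (h : ∑ k, (c k : K) * ψ k = ∑ k, (d k : K) * ψ k) : c = d := by
  have hconst := hψ.const_of_sum_mul_eq_zero (c := c - d) (by
    simp only [Pi.sub_apply, Rat.cast_sub, sub_mul, sum_sub_distrib, h, sub_self])
  have hzero : (p : ℚ) * (c - d) 0 = 0 := calc
    (p : ℚ) * (c - d) 0 = ∑ k, (c - d) k := by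
      simp only [hconst _ 0, sum_const, card_univ, ZMod.card, nsmul_eq_mul]
    _ = 0 := by simp only [Pi.sub_apply, sum_sub_distrib, hsum, sub_self]
  funext k
  have hk := hconst k 0
  rw [(mul_eq_zero.1 hzero).resolve_left (Nat.cast_ne_zero.2 hp.out.ne_zero), Pi.sub_apply,
    sub_eq_zero] at hk
  exact hk

-- Both sums are combinations of the values `ψ k` whose coefficients are the multiplicities of `k`
-- in the multisets `{a * s | s ∈ T}` and `{b * s | s ∈ T}`.
lemma image_mul_eq_of_sum_eq (hψ : ψ.IsPrimitive) (T : Finset (ZMod p)) {a b : ZMod p}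
    (h : ∑ s ∈ T, ψ (a * s) = ∑ s ∈ T, ψ (b * s)) :
    T.image (a * ·) = T.image (b * ·) := by
  set count : ZMod p → ZMod p → ℚ := fun a k => #{s ∈ T | a * s = k}
  have hsum (a : ZMod p) : ∑ k, count a k = #T := by
    simp only [count]
    exact_mod_cast (card_eq_sum_card_fiberwise (fun s _ => mem_univ (a * s))).symm
  have hchar (a : ZMod p) : ∑ k, (count a k : K) * ψ k = ∑ s ∈ T, ψ (a * s) := by
    rw [← sum_fiberwise' T (a * ·) ψ]
    simp only [count, sum_const, nsmul_eq_mul, Rat.cast_natCast]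
  have hcount := hψ.eq_of_sum_mul_eq ((hsum a).trans (hsum b).symm)
    ((hchar a).trans (h.trans (hchar b).symm))
  ext k
  have hk := congrFun hcount k
  simp only [count, Nat.cast_inj] at hk
  simp only [mem_image, ← card_pos, ← filter_nonempty_iff, hk]

end IsPrimitive

end AddChar

section CharacterEigenvectors

variable {n : ℕ} [NeZero n] {R : Type*} [CommRing R] (ψ : AddChar (ZMod n) R)

def circSymbol (M : Matrix (ZMod n) (ZMod n) R) (a : ZMod n) : R := ∑ k, M 0 k * ψ (a * k)

variable {ψ}

lemma mulVec_mulShift_eq_smul {M : Matrix (ZMod n) (ZMod n) R}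
    (hM : ∀ i j t, M (i + t) (j + t) = M i j) (a : ZMod n) :
    M *ᵥ ⇑(ψ.mulShift a) = circSymbol ψ M a • ⇑(ψ.mulShift a) := by
  ext i
  simp only [mulVec, dotProduct, AddChar.mulShift_apply, Pi.smul_apply, smul_eq_mul,
    circSymbol, sum_mul]
  refine (Fintype.sum_equiv (Equiv.addLeft i) _ _ fun k => ?_).symm
  have hMk : M i (i + k) = M 0 k := by simpa [add_comm] using hM 0 k i
  rw [Equiv.coe_addLeft, hMk, mul_add, AddChar.map_add_eq_mul]
  ring

lemma circSymbol_mul_left {M : Matrix (ZMod n) (ZMod n) R} (m : (ZMod n)ˣ)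
    (hM : ∀ i j, M (m * i) (m * j) = M i j) (b : ZMod n) :
    circSymbol ψ M (m * b) = circSymbol ψ M b := by
  refine Fintype.sum_equiv (Units.mulLeft m) _ _ fun k => ?_
  have hMk : M 0 (m * k) = M 0 k := by simpa using hM 0 k
  rw [Units.mulLeft_apply, hMk, mul_assoc, mul_left_comm]

end CharacterEigenvectors

lemma Matrix.aeval_mulVec_eq_smul {ι R : Type*} [Fintype ι] [DecidableEq ι] [CommRing R]
    {M : Matrix ι ι R} {v : ι → R} {μ : R} (h : M *ᵥ v = μ • v) (q : R[X]) :
    aeval M q *ᵥ v = q.eval μ • v := by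
  rw [← Matrix.toLinAlgEquiv'_apply, ← aeval_algHom_apply]
  exact Module.End.aeval_apply_of_mem_apply_eq_smul (by rwa [Matrix.toLinAlgEquiv'_apply])

lemma Matrix.ext_of_mulVec_mulShift {n : ℕ} [NeZero n] {K : Type*} [Field K] [NeZero (n : K)]
    {ψ : AddChar (ZMod n) K} (hψ : ψ.IsPrimitive) {M N : Matrix (ZMod n) (ZMod n) K}
    (h : ∀ a, M *ᵥ ⇑(ψ.mulShift a) = N *ᵥ ⇑(ψ.mulShift a)) : M = N := by
  have hsingle (j : ZMod n) :
      Pi.single j 1 = (n : K)⁻¹ • ∑ a, ψ (-(a * j)) • ⇑(ψ.mulShift a) := by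
    ext i
    have hexp (a : ZMod n) : ψ (-(a * j)) * ψ (a * i) = ψ (a * (i - j)) := by
      rw [← AddChar.map_add_eq_mul]; ring_nf
    simp only [Pi.smul_apply, Finset.sum_apply, AddChar.mulShift_apply, smul_eq_mul, hexp,
      AddChar.sum_mulShift _ hψ, ZMod.card, sub_eq_zero, Pi.single_apply]
    split_ifs
    · exact (inv_mul_cancel₀ (NeZero.ne (n : K))).symm
    · simp
  have hcol (j : ZMod n) : M *ᵥ Pi.single j 1 = N *ᵥ Pi.single j 1 := by
    simp only [hsingle j, mulVec_smul, mulVec_sum, h]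
  ext i j
  simpa using congrFun (hcol j) i

theorem Polynomial.exists_eval_eq_of_factorsThrough {ι K : Type*} [Fintype ι] [Field K]
    {g h : ι → K} (hgh : h.FactorsThrough g) : ∃ q : K[X], ∀ a, q.eval (g a) = h a := by
  classical
  refine ⟨Lagrange.interpolate (univ.image g) id (Function.extend g h 0), fun a => ?_⟩
  rw [← id_eq (g a), Lagrange.eval_interpolate_at_node _ (Set.injOn_id _)
    (mem_image_of_mem g (mem_univ a)), hgh.extend_apply]

lemma Finset.mul_mem_iff_of_image_mul_eq {F : Type*} [Field F] [DecidableEq F] {T : Finset F}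
    {a b : F} (ha : a ≠ 0) (hb : b ≠ 0) (h : T.image (a * ·) = T.image (b * ·)) (x : F) :
    a * b⁻¹ * x ∈ T ↔ x ∈ T := by
  constructor
  · intro hx
    obtain ⟨y, hy, hxy⟩ := mem_image.1 (h ▸ mem_image_of_mem (b * ·) hx)
    have : y = x := mul_left_cancel₀ ha (by rw [hxy]; field_simp)
    rwa [← this]
  · intro hx
    obtain ⟨y, hy, hxy⟩ := mem_image.1 (h.symm ▸ mem_image_of_mem (a * ·) hx)
    have : y = a * b⁻¹ * x := by field_simp; linear_combination hxy
    rwa [← this]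

lemma Finset.ne_zero_of_image_mul_eq {M₀ : Type*} [MulZeroClass M₀] [NoZeroDivisors M₀]
    [DecidableEq M₀] {T : Finset M₀} (hT : T.Nonempty) (h0 : (0 : M₀) ∉ T) {a b : M₀}
    (h : T.image (a * ·) = T.image (b * ·)) (hb : b ≠ 0) : a ≠ 0 := by
  rintro rfl
  obtain ⟨s, hs⟩ := hT
  obtain ⟨t, ht, hbt⟩ := mem_image.1 (h ▸ mem_image_of_mem (0 * ·) hs)
  rw [zero_mul, mul_eq_zero] at hbt
  exact h0 (hbt.resolve_left hb ▸ ht)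

section CirculantGraph

variable {n : ℕ} {X : SimpleGraph (ZMod n)} {S : Set (ZMod n)}

lemma isCircAut_addRight (hS : ∀ i j, X.Adj i j ↔ j - i ∈ S) (t : ZMod n) :
    IsCircAut X (Equiv.addRight t) := by
  intro i j
  simp only [Equiv.coe_addRight, hS, add_sub_add_right_eq_sub]

lemma isCircAut_mulLeft (hS : ∀ i j, X.Adj i j ↔ j - i ∈ S) (m : (ZMod n)ˣ)
    (hm : ∀ x, (m : ZMod n) * x ∈ S ↔ x ∈ S) : IsCircAut X (Units.mulLeft m) := by
  intro i j
  simp only [Units.mulLeft_apply, hS, ← mul_sub, hm]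

variable [NeZero n]

lemma commute_permMatrixZ_iff (σ : Equiv.Perm (ZMod n)) (f : Matrix (ZMod n) (ZMod n) ℂ) :
    Commute (permMatrixZ σ) f ↔ ∀ i j, f (σ i) (σ j) = f i j := by
  have hleft (i j : ZMod n) : (permMatrixZ σ * f) i j = f (σ.symm i) j := by
    simp [permMatrixZ, Matrix.mul_apply, ← Equiv.symm_apply_eq]
  have hright (i j : ZMod n) : (f * permMatrixZ σ) i j = f i (σ j) := by
    simp [permMatrixZ, Matrix.mul_apply]
  simp only [Commute, SemiconjBy, ← Matrix.ext_iff, hleft, hright]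
  exact ⟨fun h i j => by simpa using (h (σ i) j).symm,
    fun h i j => by simpa using (h (σ.symm i) j).symm⟩

lemma commute_permMatrixZ_adjMatrix [DecidableRel X.Adj] {σ : Equiv.Perm (ZMod n)}
    (hσ : IsCircAut X σ) : Commute (permMatrixZ σ) (X.adjMatrix ℂ) :=
  (commute_permMatrixZ_iff σ _).2 fun i j => by simp only [SimpleGraph.adjMatrix_apply, hσ i j]

lemma circSymbol_adjMatrix [DecidableRel X.Adj] {R : Type*} [CommRing R]
    (ψ : AddChar (ZMod n) R) (a : ZMod n) :
    circSymbol ψ (X.adjMatrix R) a = ∑ s ∈ X.neighborFinset 0, ψ (a * s) := by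
  simp only [circSymbol, SimpleGraph.adjMatrix_apply, ite_mul, one_mul, zero_mul, sum_ite,
    sum_const_zero, add_zero]
  congr 1
  ext s
  simp

end CirculantGraph

-- Equal eigenvalues of `X.adjMatrix` at `a ≠ 0` and `b ≠ 0` force `a • S = b • S`, so
-- `x ↦ a * b⁻¹ * x` is an automorphism of `X`, and `f` is invariant under it.
lemma factorsThrough_circSymbol_adjMatrix {p : ℕ} [Fact p.Prime] {ψ : AddChar (ZMod p) ℂ}
    (hψ : ψ.IsPrimitive) {X : SimpleGraph (ZMod p)} [DecidableRel X.Adj] {S : Set (ZMod p)}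
    (hS : ∀ i j, X.Adj i j ↔ j - i ∈ S) (hne : S.Nonempty) {f : Matrix (ZMod p) (ZMod p) ℂ}
    (hf : ∀ σ, IsCircAut X σ → Commute (permMatrixZ σ) f) :
    (circSymbol ψ f).FactorsThrough (circSymbol ψ (X.adjMatrix ℂ)) := by
  intro a b h
  set T := X.neighborFinset 0
  have hT (s : ZMod p) : s ∈ T ↔ s ∈ S := by rw [SimpleGraph.mem_neighborFinset, hS, sub_zero]
  have hT0 : 0 ∉ T := by simp [T]
  obtain ⟨s, hs⟩ := hne
  have hTne : T.Nonempty := ⟨s, (hT s).2 hs⟩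
  rw [circSymbol_adjMatrix, circSymbol_adjMatrix] at h
  have himg := hψ.image_mul_eq_of_sum_eq T h
  rcases eq_or_ne b 0 with rfl | hb
  · obtain rfl : a = 0 := not_not.1 fun ha => ne_zero_of_image_mul_eq hTne hT0 himg.symm ha rfl
    rfl
  have ha := ne_zero_of_image_mul_eq hTne hT0 himg hb
  set m := Units.mk0 (a * b⁻¹) (mul_ne_zero ha (inv_ne_zero hb))
  have hm (x : ZMod p) : ↑m * x ∈ S ↔ x ∈ S := by
    rw [← hT, ← hT]
    exact mul_mem_iff_of_image_mul_eq ha hb himg x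
  have hfm := (commute_permMatrixZ_iff _ _).1 (hf _ (isCircAut_mulLeft hS m hm))
  have := circSymbol_mul_left (ψ := ψ) m hfm b
  rwa [Units.val_mk0, mul_assoc, inv_mul_cancel₀ hb, mul_one] at this

theorem stmt12_general {p : ℕ} [Fact p.Prime]
    (X : SimpleGraph (ZMod p)) [DecidableRel X.Adj] (S : Set (ZMod p))
    (hS : ∀ i j : ZMod p, X.Adj i j ↔ j - i ∈ S)
    (hne : S.Nonempty) :
    {f : Matrix (ZMod p) (ZMod p) ℂ |
        ∀ σ : Equiv.Perm (ZMod p), IsCircAut X σ →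
          permMatrixZ σ * f = f * permMatrixZ σ} =
      Set.range (fun q : Polynomial ℂ => Polynomial.aeval (X.adjMatrix ℂ) q) := by
  have htrans {f : Matrix (ZMod p) (ZMod p) ℂ}
      (hf : ∀ σ, IsCircAut X σ → Commute (permMatrixZ σ) f) (i j t : ZMod p) :
      f (i + t) (j + t) = f i j :=
    (commute_permMatrixZ_iff _ f).1 (hf _ (isCircAut_addRight hS t)) i j
  have hψ := ZMod.isPrimitive_stdAddChar p
  ext f
  constructor
  · intro hf
    obtain ⟨q, hq⟩ := exists_eval_eq_of_factorsThrough
      (factorsThrough_circSymbol_adjMatrix hψ hS hne hf)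
    refine ⟨q, ext_of_mulVec_mulShift hψ fun a => ?_⟩
    rw [aeval_mulVec_eq_smul (mulVec_mulShift_eq_smul
        (htrans fun _ => commute_permMatrixZ_adjMatrix) a), hq,
      mulVec_mulShift_eq_smul (htrans hf) a]
  · rintro ⟨q, rfl⟩ σ hσ
    show Commute (permMatrixZ σ) (aeval (X.adjMatrix ℂ) q)
    rw [aeval_eq_smeval]
    exact (smeval_commute_left ℂ q (commute_permMatrixZ_adjMatrix hσ).symm).symm

/-- For a nontrivial circulant `p`-graph `X` with adjacency matrix `d_X`, the set of
complex `p×p` matrices commuting with the permutation matrix of every automorphism of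
`X` equals the set of complex polynomials in `d_X`. -/
theorem stmt12 {p : ℕ} [Fact p.Prime] [NeZero p]
    (X : SimpleGraph (ZMod p)) [DecidableRel X.Adj] (S : Set (ZMod p))
    (hS : ∀ i j : ZMod p, X.Adj i j ↔ j - i ∈ S)
    (hne : S.Nonempty) (hnc : S ≠ {x : ZMod p | x ≠ 0}) :
    {f : Matrix (ZMod p) (ZMod p) ℂ |
        ∀ σ : Equiv.Perm (ZMod p), IsCircAut X σ →
          permMatrixZ σ * f = f * permMatrixZ σ} =
      Set.range (fun q : Polynomial ℂ => Polynomial.aeval (X.adjMatrix ℂ) q) :=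
  stmt12_general X S hS hne
end

section
/- Let X be a nontrivial circulant p-graph of type k, with adjacency matrix d_X regarded as a complex p×p matrix. Then every eigenspace of d_X other than the line spanned by the all-ones vector has dimension k, and d_X has exactly (p−1)/k + 1 distinct eigenvalues. -/
/-!
The characters `j ↦ ω ^ (a * j)` (`a ∈ ZMod p`, `ω` a primitive `p`-th root of unity) form an
eigenbasis of every circulant matrix; for `d_X` the eigenvalue of the `a`-th one is
`λ a = ∑ s ∈ S, ω ^ (a * s)`. As `1 + X + ⋯ + X ^ (p - 1)` is the minimal polynomial of `ω`
over `ℚ`, a rational combination of `1, ω, …, ω ^ (p - 1)` vanishes only if its coefficients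
are all equal. Hence, for units `u, w`, `λ u = λ w` iff `u • S = w • S` iff `u⁻¹ * w ∈ E`, and
`λ u ≠ λ 0 = |S|`. The level sets of `λ` are thus `{0}`, giving the all-ones line, and the
`(p - 1) / k` cosets of `E`, each of size `k`.
-/

open Module Submodule Matrix Pointwise

open Polynomial in
theorem IsPrimitiveRoot.eq_of_sum_rat_mul_pow_val_eq_zero {K : Type*} [Field K] [CharZero K]
    {p : ℕ} [Fact p.Prime] {ω : K} (hω : IsPrimitiveRoot ω p) {c : ZMod p → ℚ}
    (h : ∑ t, (c t : K) * ω ^ t.val = 0) (t : ZMod p) : c t = c 0 := by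
  set q : ℚ[X] := ∑ t, C (c t) * X ^ t.val
  -- `q` has degree `< p` and is divisible by `cyclotomic p ℚ = 1 + X + ⋯ + X ^ (p - 1)`,
  -- so it is a constant multiple of it.
  have hq_coeff (t : ZMod p) : q.coeff t.val = c t := by
    simp [q, coeff_X_pow, (ZMod.val_injective p).eq_iff]
  have hdvd : cyclotomic p ℚ ∣ q := by
    rw [cyclotomic_eq_minpoly_rat hω (Nat.Prime.pos Fact.out)]
    exact minpoly.dvd ℚ ω (by simpa [q] using h)
  have hdeg : q.natDegree ≤ (cyclotomic p ℚ).natDegree := by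
    rw [natDegree_cyclotomic, Nat.totient_prime Fact.out]
    refine natDegree_sum_le_of_forall_le _ _ fun t _ => (natDegree_C_mul_X_pow_le _ _).trans ?_
    have := t.val_lt
    omega
  have hq := eq_leadingCoeff_mul_of_monic_of_dvd_of_natDegree_le (cyclotomic.monic p ℚ) hdvd hdeg
  have hcyc (t : ZMod p) : (cyclotomic p ℚ).coeff t.val = 1 := by
    simp [cyclotomic_prime, coeff_X_pow, t.val_lt]
  rw [← hq_coeff, ← hq_coeff, hq, coeff_C_mul, coeff_C_mul, hcyc, hcyc]

lemma ZMod.sum_pow_val_mul_eq_sum_image {p : ℕ} [Fact p.Prime] {M : Type*} [Semiring M] (ω : M)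
    (T : Finset (ZMod p)) {a : ZMod p} (ha : a ≠ 0) :
    ∑ s ∈ T, ω ^ (a * s).val = ∑ t ∈ T.image (a * ·), ω ^ t.val :=
  (Finset.sum_image (f := fun t => ω ^ t.val) fun _ _ _ _ => mul_left_cancel₀ ha).symm

section RootsOfUnity

variable {K : Type*} [Field K] [CharZero K] {p : ℕ} [Fact p.Prime] {ω : K}

theorem IsPrimitiveRoot.finset_eq_of_sum_pow_val_eq (hω : IsPrimitiveRoot ω p)
    {A B : Finset (ZMod p)} (hA : 0 ∉ A) (hB : 0 ∉ B)
    (h : ∑ t ∈ A, ω ^ t.val = ∑ t ∈ B, ω ^ t.val) : A = B := by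
  classical
  let c (t : ZMod p) : ℚ := (if t ∈ A then 1 else 0) - (if t ∈ B then 1 else 0)
  have hc := hω.eq_of_sum_rat_mul_pow_val_eq_zero (c := c)
    (by simp [c, apply_ite (Rat.cast : ℚ → K), sub_mul, Finset.sum_sub_distrib, h])
  ext t
  have hct := hc t
  simp only [c, hA, hB, if_false, sub_zero] at hct
  by_cases htA : t ∈ A <;> by_cases htB : t ∈ B <;> simp_all

theorem IsPrimitiveRoot.sum_pow_val_ne_natCast (hω : IsPrimitiveRoot ω p)
    {A : Finset (ZMod p)} (hA : 0 ∉ A) {n : ℕ} (hn : n ≠ 0) : ∑ t ∈ A, ω ^ t.val ≠ n := by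
  classical
  intro h
  let c (t : ZMod p) : ℚ := (if t ∈ A then 1 else 0) - (if t = 0 then (n : ℚ) else 0)
  have hc1 := hω.eq_of_sum_rat_mul_pow_val_eq_zero (c := c)
    (by simp [c, apply_ite (Rat.cast : ℚ → K), sub_mul, Finset.sum_sub_distrib, h]) 1
  by_cases h1A : (1 : ZMod p) ∈ A
  · simp only [c, h1A, hA, ↓reduceIte, one_ne_zero, sub_zero, zero_sub] at hc1
    linarith
  · simp only [c, h1A, hA, ↓reduceIte, one_ne_zero, sub_self, zero_sub, zero_eq_neg,
      Nat.cast_eq_zero] at hc1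
    exact hn hc1

theorem IsPrimitiveRoot.sum_pow_val_mul_eq_iff (hω : IsPrimitiveRoot ω p) {T : Finset (ZMod p)}
    (h0 : 0 ∉ T) {u w : ZMod p} (hu : u ≠ 0) (hw : w ≠ 0) :
    ∑ s ∈ T, ω ^ (u * s).val = ∑ s ∈ T, ω ^ (w * s).val ↔ T.image (u * ·) = T.image (w * ·) := by
  rw [ZMod.sum_pow_val_mul_eq_sum_image _ _ hu, ZMod.sum_pow_val_mul_eq_sum_image _ _ hw]
  exact ⟨hω.finset_eq_of_sum_pow_val_eq (by simp [hu, h0]) (by simp [hw, h0]), fun h => h ▸ rfl⟩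

theorem IsPrimitiveRoot.sum_pow_val_mul_ne_card (hω : IsPrimitiveRoot ω p) {T : Finset (ZMod p)}
    (h0 : 0 ∉ T) (hT : T.Nonempty) {u : ZMod p} (hu : u ≠ 0) :
    ∑ s ∈ T, ω ^ (u * s).val ≠ T.card := by
  rw [ZMod.sum_pow_val_mul_eq_sum_image _ _ hu]
  exact hω.sum_pow_val_ne_natCast (by simp [hu, h0]) hT.card_ne_zero

end RootsOfUnity

section Eigenbasis

variable {ι K V : Type*} [Field K] [AddCommGroup V] [Module K V] {b : Basis ι K V}
  {f : End K V} {d : ι → K}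

lemma Module.Basis.repr_apply_of_apply_eq_smul (hf : ∀ i, f (b i) = d i • b i) (x : V) (i : ι) :
    b.repr (f x) i = d i * b.repr x i := by
  have : Finsupp.lapply i ∘ₗ b.repr.toLinearMap ∘ₗ f =
      d i • (Finsupp.lapply i ∘ₗ b.repr.toLinearMap) :=
    b.ext fun j => by
      obtain rfl | hij := eq_or_ne j i
      · simp [hf]
      · simp [hf, Finsupp.single_eq_of_ne' hij]
  exact LinearMap.congr_fun this x

lemma Module.Basis.eigenspace_eq_span_image (hf : ∀ i, f (b i) = d i • b i) (μ : K) :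
    f.eigenspace μ = span K (b '' {i | d i = μ}) := by
  ext x
  rw [End.mem_eigenspace_iff, b.mem_span_image, ← b.repr.injective.eq_iff, Finsupp.ext_iff]
  simp only [b.repr_apply_of_apply_eq_smul hf, map_smul, Finsupp.smul_apply, smul_eq_mul,
    Set.subset_def, Finset.mem_coe, Finsupp.mem_support_iff, Set.mem_ofPred_eq]
  refine forall_congr' fun i => ⟨fun h hx => mul_right_cancel₀ hx h, fun h => ?_⟩
  by_cases hx : b.repr x i = 0
  · simp [hx]
  · rw [h hx]

lemma Module.Basis.finrank_span_image [Finite ι] (T : Set ι) :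
    finrank K (span K (b '' T)) = T.ncard := by
  have := Fintype.ofFinite T
  have hli : LinearIndependent K fun i : T => b i :=
    b.linearIndependent.comp _ Subtype.val_injective
  rw [Set.image_eq_range, finrank_span_eq_card hli, ← Nat.card_eq_fintype_card,
    Nat.card_coe_set_eq]

lemma Module.Basis.hasEigenvalue_iff_mem_range (hf : ∀ i, f (b i) = d i • b i) (μ : K) :
    f.HasEigenvalue μ ↔ μ ∈ Set.range d := by
  rw [End.hasEigenvalue_iff, b.eigenspace_eq_span_image hf, Ne, span_eq_bot]
  simp [b.ne_zero, Set.mem_range]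

end Eigenbasis

namespace Subgroup

variable {G β : Type*} [Group G] {H : Subgroup G} {g : G → β}

lemma nat_card_range_eq_index (hg : ∀ u w, g u = g w ↔ u⁻¹ * w ∈ H) :
    Nat.card (Set.range g) = H.index := by
  have : Setoid.ker g = QuotientGroup.leftRel H :=
    Setoid.ext fun u w => (hg u w).trans QuotientGroup.leftRel_apply.symm
  rw [← Nat.card_congr (Setoid.quotientKerEquivRange g), this]
  rfl

lemma ncard_fiber_eq_nat_card (hg : ∀ u w, g u = g w ↔ u⁻¹ * w ∈ H) (u : G) :
    {w | g w = g u}.ncard = Nat.card H := by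
  have : {w | g w = g u} = u • (H : Set G) := by
    ext w
    rw [Set.mem_ofPred_eq, mem_leftCoset_iff, SetLike.mem_coe, eq_comm, hg]
  rw [this, Set.ncard_smul_set, ← Nat.card_coe_set_eq, SetLike.coe_sort_coe]

end Subgroup

section UnitsFibers

variable {F β : Type*} [GroupWithZero F] {d : F → β} {E : Subgroup Fˣ}

lemma setOf_apply_eq_apply_zero (hd0 : ∀ u : Fˣ, d u ≠ d 0) : {i | d i = d 0} = {0} := by
  refine Set.eq_singleton_iff_unique_mem.mpr ⟨rfl, fun i hi => ?_⟩
  by_contra hne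
  lift i to Fˣ using IsUnit.mk0 i hne
  exact hd0 i hi

lemma ncard_fiber_units_eq_nat_card (hd0 : ∀ u : Fˣ, d u ≠ d 0)
    (hdE : ∀ u w : Fˣ, d u = d w ↔ u⁻¹ * w ∈ E) (u : Fˣ) :
    {i | d i = d u}.ncard = Nat.card E := by
  have : {i | d i = d u} = Units.val '' {w : Fˣ | d w = d u} := by
    ext i
    refine ⟨fun hi => ?_, fun ⟨w, hw, hwi⟩ => hwi ▸ hw⟩
    have hne : i ≠ 0 := fun h => hd0 u (h ▸ hi).symm
    exact ⟨(IsUnit.mk0 i hne).unit, hi, rfl⟩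
  rw [this, Set.ncard_image_of_injective _ Units.val_injective,
    Subgroup.ncard_fiber_eq_nat_card (g := fun w : Fˣ => d w) hdE]

lemma ncard_range_eq_index_add_one [Finite F] (hd0 : ∀ u : Fˣ, d u ≠ d 0)
    (hdE : ∀ u w : Fˣ, d u = d w ↔ u⁻¹ * w ∈ E) :
    (Set.range d).ncard = E.index + 1 := by
  have hrange : Set.range d = insert (d 0) (Set.range fun u : Fˣ => d u) := by
    ext μ
    refine ⟨?_, ?_⟩
    · rintro ⟨i, rfl⟩
      obtain rfl | hi := eq_or_ne i 0
      · exact Set.mem_insert _ _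
      · exact Set.mem_insert_of_mem _ ⟨(IsUnit.mk0 i hi).unit, rfl⟩
    · rintro (rfl | ⟨u, rfl⟩) <;> exact ⟨_, rfl⟩
  have hnotMem : d 0 ∉ Set.range fun u : Fˣ => d u := fun ⟨u, hu⟩ => hd0 u hu
  rw [hrange, Set.ncard_insert_of_notMem hnotMem, ← Nat.card_coe_set_eq,
    Subgroup.nat_card_range_eq_index hdE]

end UnitsFibers

section UnitsEigenbasis

variable {F K V : Type*} [GroupWithZero F] [Finite F] [Field K] [AddCommGroup V] [Module K V]
  {b : Basis F K V} {f : End K V} {d : F → K} {E : Subgroup Fˣ}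

theorem finrank_eigenspace_eq_nat_card_of_ne_span (hf : ∀ i, f (b i) = d i • b i)
    (hd0 : ∀ u : Fˣ, d u ≠ d 0) (hdE : ∀ u w : Fˣ, d u = d w ↔ u⁻¹ * w ∈ E) {μ : K}
    (hμ : f.HasEigenvalue μ) (hμ0 : f.eigenspace μ ≠ span K {b 0}) :
    finrank K (f.eigenspace μ) = Nat.card E := by
  obtain ⟨i, rfl⟩ := (b.hasEigenvalue_iff_mem_range hf μ).mp hμ
  obtain rfl | hi := eq_or_ne i 0
  · refine absurd ?_ hμ0
    rw [b.eigenspace_eq_span_image hf, setOf_apply_eq_apply_zero hd0, Set.image_singleton]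
  · lift i to Fˣ using IsUnit.mk0 i hi
    rw [b.eigenspace_eq_span_image hf, b.finrank_span_image, ncard_fiber_units_eq_nat_card hd0 hdE]

theorem ncard_setOf_hasEigenvalue_eq_index_add_one (hf : ∀ i, f (b i) = d i • b i)
    (hd0 : ∀ u : Fˣ, d u ≠ d 0) (hdE : ∀ u w : Fˣ, d u = d w ↔ u⁻¹ * w ∈ E) :
    {μ | f.HasEigenvalue μ}.ncard = E.index + 1 := by
  have : {μ | f.HasEigenvalue μ} = Set.range d := Set.ext (b.hasEigenvalue_iff_mem_range hf)
  rw [this, ncard_range_eq_index_add_one hd0 hdE]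

end UnitsEigenbasis

namespace AddChar

variable {R : Type*} [CommRing R] [Fintype R] {ψ : AddChar R ℂ}

noncomputable def mulShiftBasis (hψ : ψ.IsPrimitive) : Basis R ℂ (R → ℂ) :=
  basisOfLinearIndependentOfCardEqFinrank
    ((AddChar.linearIndependent R ℂ).comp _ (to_mulShift_inj_of_isPrimitive hψ)) (by simp)

lemma mulShiftBasis_apply (hψ : ψ.IsPrimitive) (a : R) : mulShiftBasis hψ a = ψ.mulShift a :=
  congrFun (coe_basisOfLinearIndependentOfCardEqFinrank _ _) a

lemma mulShiftBasis_zero (hψ : ψ.IsPrimitive) : mulShiftBasis hψ 0 = fun _ => 1 := by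
  rw [mulShiftBasis_apply, mulShift_zero]
  rfl

end AddChar

lemma SimpleGraph.adjMatrix_mulVec_addChar {G R : Type*} [AddGroup G] [Fintype G] [DecidableEq G]
    [CommRing R] (X : SimpleGraph G) [DecidableRel X.Adj] {T : Finset G}
    (hT : ∀ i j, X.Adj i j ↔ j - i ∈ T) (χ : AddChar G R) :
    X.adjMatrix R *ᵥ ⇑χ = (∑ s ∈ T, χ s) • ⇑χ := by
  ext i
  have hnbr : X.neighborFinset i = T.image (· + i) := by
    ext j
    rw [SimpleGraph.mem_neighborFinset, hT, Finset.mem_image]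
    exact ⟨fun h => ⟨j - i, h, sub_add_cancel j i⟩, by rintro ⟨s, hs, rfl⟩; simpa using hs⟩
  rw [SimpleGraph.adjMatrix_mulVec_apply, hnbr, Finset.sum_image (fun _ _ _ _ => add_right_cancel)]
  simp [AddChar.map_add_eq_mul, Finset.sum_mul]

lemma SimpleGraph.toLin'_adjMatrix_mulShiftBasis {R : Type*} [CommRing R] [Fintype R]
    [DecidableEq R] (X : SimpleGraph R) [DecidableRel X.Adj] {T : Finset R}
    (hT : ∀ i j, X.Adj i j ↔ j - i ∈ T) {ψ : AddChar R ℂ} (hψ : ψ.IsPrimitive) (a : R) :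
    Matrix.toLin' (X.adjMatrix ℂ) (AddChar.mulShiftBasis hψ a) =
      (∑ s ∈ T, ψ (a * s)) • AddChar.mulShiftBasis hψ a := by
  rw [Matrix.toLin'_apply, AddChar.mulShiftBasis_apply, X.adjMatrix_mulVec_addChar hT]
  simp [AddChar.mulShift_apply]

lemma Units.mul_inv_mem_iff_image_mul_eq {M : Type*} [Monoid M] {S : Set M} {E : Subgroup Mˣ}
    (hE : ∀ a : Mˣ, a ∈ E ↔ (fun s => (a : M) * s) '' S = S) (u w : Mˣ) :
    u⁻¹ * w ∈ E ↔ (fun s => (u : M) * s) '' S = (fun s => (w : M) * s) '' S := by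
  have himage (a : Mˣ) : (fun s => (a : M) * s) '' S = a • S := rfl
  rw [hE, himage, himage, himage, mul_smul, inv_smul_eq_iff, eq_comm]

theorem stmt13_general {p : ℕ} [Fact p.Prime] [NeZero p]
    (X : SimpleGraph (ZMod p)) [DecidableRel X.Adj] (S : Set (ZMod p))
    (hS : ∀ i j : ZMod p, X.Adj i j ↔ j - i ∈ S)
    (hne : S.Nonempty)
    (E : Subgroup (ZMod p)ˣ)
    (hE : ∀ a : (ZMod p)ˣ, a ∈ E ↔ (fun s => (a : ZMod p) * s) '' S = S)
    (k : ℕ) (hk : k = Nat.card E) :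
    (∀ μ : ℂ,
      Module.End.HasEigenvalue (Matrix.toLin' (X.adjMatrix ℂ)) μ →
      Module.End.eigenspace (Matrix.toLin' (X.adjMatrix ℂ)) μ ≠
        Submodule.span ℂ {(fun _ => 1 : ZMod p → ℂ)} →
      Module.finrank ℂ (Module.End.eigenspace (Matrix.toLin' (X.adjMatrix ℂ)) μ) = k) ∧
    {μ : ℂ | Module.End.HasEigenvalue (Matrix.toLin' (X.adjMatrix ℂ)) μ}.ncard =
      (p - 1) / k + 1 := by
  classical
  subst hk
  set ω : ℂ := Complex.exp (2 * Real.pi * Complex.I / p)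
  have hω : IsPrimitiveRoot ω p := Complex.isPrimitiveRoot_exp p (NeZero.ne p)
  set ψ := AddChar.zmodChar p hω.pow_eq_one
  have hψ : ψ.IsPrimitive := AddChar.zmodChar_primitive_of_primitive_root p hω
  set T := S.toFinite.toFinset
  have hTS : (T : Set (ZMod p)) = S := S.toFinite.coe_toFinset
  have hT (i j : ZMod p) : X.Adj i j ↔ j - i ∈ T := by rw [hS, S.toFinite.mem_toFinset]
  have h0 : (0 : ZMod p) ∉ T := fun h => X.irrefl ((hT 0 0).mpr (by simpa using h))
  have hf := X.toLin'_adjMatrix_mulShiftBasis hT hψ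
  have hd0 (u : (ZMod p)ˣ) : ∑ s ∈ T, ψ (u * s) ≠ ∑ s ∈ T, ψ (0 * s) := by
    simpa [ψ, AddChar.zmodChar_apply] using
      hω.sum_pow_val_mul_ne_card h0 (by rwa [← Finset.coe_nonempty, hTS]) u.ne_zero
  have hdE (u w : (ZMod p)ˣ) : ∑ s ∈ T, ψ (u * s) = ∑ s ∈ T, ψ (w * s) ↔ u⁻¹ * w ∈ E := by
    simp only [ψ, AddChar.zmodChar_apply]
    rw [hω.sum_pow_val_mul_eq_iff h0 u.ne_zero w.ne_zero, Units.mul_inv_mem_iff_image_mul_eq hE,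
      ← hTS, ← Finset.coe_image, ← Finset.coe_image, Finset.coe_inj]
  have hindex : E.index = (p - 1) / Nat.card E := by
    rw [← ZMod.card_units p, ← Nat.card_eq_fintype_card, ← E.index_mul_card,
      Nat.mul_div_cancel _ Nat.card_pos]
  refine ⟨fun μ hμ hμ1 => ?_, ?_⟩
  · exact finrank_eigenspace_eq_nat_card_of_ne_span hf hd0 hdE hμ
      (by rwa [AddChar.mulShiftBasis_zero])
  · rw [ncard_setOf_hasEigenvalue_eq_index_add_one hf hd0 hdE, hindex]

/-- For a nontrivial circulant `p`-graph `X` of type `k = |E|`, viewed through its complex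
adjacency matrix `d_X`: every eigenspace of `d_X` other than the line spanned by the
all-ones vector has dimension `k`, and `d_X` has exactly `(p−1)/k + 1` distinct
eigenvalues. -/
theorem stmt13 {p : ℕ} [Fact p.Prime] [NeZero p]
    (X : SimpleGraph (ZMod p)) [DecidableRel X.Adj] (S : Set (ZMod p))
    (hS : ∀ i j : ZMod p, X.Adj i j ↔ j - i ∈ S)
    (hne : S.Nonempty) (hnc : S ≠ {x : ZMod p | x ≠ 0})
    (E : Subgroup (ZMod p)ˣ)
    (hE : ∀ a : (ZMod p)ˣ, a ∈ E ↔ (fun s => (a : ZMod p) * s) '' S = S)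
    (k : ℕ) (hk : k = Nat.card E) :
    (∀ μ : ℂ,
      Module.End.HasEigenvalue (Matrix.toLin' (X.adjMatrix ℂ)) μ →
      Module.End.eigenspace (Matrix.toLin' (X.adjMatrix ℂ)) μ ≠
        Submodule.span ℂ {(fun _ => 1 : ZMod p → ℂ)} →
      Module.finrank ℂ (Module.End.eigenspace (Matrix.toLin' (X.adjMatrix ℂ)) μ) = k) ∧
    {μ : ℂ | Module.End.HasEigenvalue (Matrix.toLin' (X.adjMatrix ℂ)) μ}.ncard =
      (p - 1) / k + 1 :=
  stmt13_general X S hS hne E hE k hk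
end

section
/- Let p be a prime, let E be a subgroup of Z_p^× with −1 ∈ E, and for x ∈ Z_p and y ∈ Z_p ∖ {0} write yE + x := {ye + x : e ∈ E} ⊆ Z_p. Let i, j, k ∈ Z_p and y, y₁, y₂ ∈ Z_p ∖ {0}. If j ∈ yE + i and (y₁E + i) ∩ (y₂E + j) = {k}, then (yE + i) ∩ (y₂E + k) = {j} and (yE + j) ∩ (y₁E + k) = {i}. -/
/-- The subset `yE + x = {y·e + x : e ∈ E}` of `Z_p`. -/
def addCoset {p : ℕ} (E : Subgroup (ZMod p)ˣ) (y x : ZMod p) : Set (ZMod p) :=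
  {z | ∃ e ∈ E, z = y * (e : ZMod p) + x}

/-- Let `p` be a prime and `E` a subgroup of `Z_p^×` with `−1 ∈ E`. If `j ∈ yE + i` and
`(y₁E + i) ∩ (y₂E + j) = {k}`, then `(yE + i) ∩ (y₂E + k) = {j}` and
`(yE + j) ∩ (y₁E + k) = {i}`. -/
theorem stmt14 {p : ℕ} [Fact p.Prime]
    (E : Subgroup (ZMod p)ˣ) (hneg : (-1 : (ZMod p)ˣ) ∈ E)
    (i j k : ZMod p) (y y₁ y₂ : ZMod p)
    (hy : y ≠ 0) (hy₁ : y₁ ≠ 0) (hy₂ : y₂ ≠ 0)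
    (hj : j ∈ addCoset E y i)
    (hk : addCoset E y₁ i ∩ addCoset E y₂ j = {k}) :
    addCoset E y i ∩ addCoset E y₂ k = {j} ∧
      addCoset E y j ∩ addCoset E y₁ k = {i} := by
  obtain ⟨a, haE, hja⟩ := hj
  have hkmem : k ∈ addCoset E y₁ i ∩ addCoset E y₂ j := by rw [hk]; rfl
  obtain ⟨⟨b, hbE, hkb⟩, ⟨c, hcE, hkc⟩⟩ := hkmem
  have huniq : ∀ t, t ∈ addCoset E y₁ i → t ∈ addCoset E y₂ j → t = k := by
    intro t h1 h2
    have : t ∈ ({k} : Set (ZMod p)) := by rw [← hk]; exact ⟨h1, h2⟩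
    exact this
  have ha0 : (a : ZMod p) ≠ 0 := a.ne_zero
  have hb0 : (b : ZMod p) ≠ 0 := b.ne_zero
  have hc0 : (c : ZMod p) ≠ 0 := c.ne_zero
  have negmem : ∀ u : (ZMod p)ˣ, u ∈ E → -u ∈ E := by
    intro u hu
    have : (-1 : (ZMod p)ˣ) * u ∈ E := E.mul_mem hneg hu
    simpa using this
  constructor
  · apply Set.eq_singleton_iff_unique_mem.mpr
    constructor
    · refine ⟨⟨a, haE, hja⟩, ⟨-c, negmem c hcE, ?_⟩⟩
      push_cast
      linear_combination -hkc
    · rintro z ⟨⟨d, hdE, hzd⟩, ⟨f, hfE, hzf⟩⟩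
      have hd0 : (d : ZMod p) ≠ 0 := d.ne_zero
      have ht1 : y₁ * ((b * a * d⁻¹ : (ZMod p)ˣ) : ZMod p) + i ∈ addCoset E y₁ i :=
        ⟨b * a * d⁻¹, E.mul_mem (E.mul_mem hbE haE) (E.inv_mem hdE), rfl⟩
      have ht2 : y₁ * ((b * a * d⁻¹ : (ZMod p)ˣ) : ZMod p) + i ∈ addCoset E y₂ j := by
        refine ⟨-(f * a * d⁻¹), negmem _ (E.mul_mem (E.mul_mem hfE haE) (E.inv_mem hdE)), ?_⟩
        push_cast
        field_simp
        linear_combination -(↑a : ZMod p) * hkb - (↑d : ZMod p) * hja +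
          (↑a : ZMod p) * hzd - (↑a : ZMod p) * hzf
      have ht := huniq _ ht1 ht2
      rw [hkb] at ht
      push_cast at ht
      field_simp at ht
      have had : (a : ZMod p) = d := by
        apply mul_left_cancel₀ (mul_ne_zero hy₁ hb0)
        linear_combination ht
      linear_combination hzd - hja - y * had
  · apply Set.eq_singleton_iff_unique_mem.mpr
    constructor
    · refine ⟨⟨-a, negmem a haE, ?_⟩, ⟨-b, negmem b hbE, ?_⟩⟩
      · push_cast
        linear_combination -hja
      · push_cast
        linear_combination -hkb
    · rintro z ⟨⟨d, hdE, hzd⟩, ⟨f, hfE, hzf⟩⟩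
      have hd0 : (d : ZMod p) ≠ 0 := d.ne_zero
      have hf0 : (f : ZMod p) ≠ 0 := f.ne_zero
      have ht1 : y₁ * ((f * a * d⁻¹ : (ZMod p)ˣ) : ZMod p) + i ∈ addCoset E y₁ i :=
        ⟨f * a * d⁻¹, E.mul_mem (E.mul_mem hfE haE) (E.inv_mem hdE), rfl⟩
      have ht2 : y₁ * ((f * a * d⁻¹ : (ZMod p)ˣ) : ZMod p) + i ∈ addCoset E y₂ j := by
        refine ⟨-(c * a * d⁻¹), negmem _ (E.mul_mem (E.mul_mem hcE haE) (E.inv_mem hdE)), ?_⟩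
        push_cast
        field_simp
        linear_combination -(↑a : ZMod p) * hzf + (↑a : ZMod p) * hzd -
          (↑a : ZMod p) * hkc - (↑d : ZMod p) * hja
      have ht := huniq _ ht1 ht2
      rw [hkb] at ht
      push_cast at ht
      field_simp at ht
      have hfabd : (f : ZMod p) * a = (b : ZMod p) * d := by
        apply mul_left_cancel₀ hy₁
        linear_combination ht
      have hyc0 : y₂ * (c : ZMod p) ≠ 0 := mul_ne_zero hy₂ hc0
      have key : y₂ * (c : ZMod p) * ((d : ZMod p) + a) = 0 := by
        linear_combination (-(↑a : ZMod p) - ↑d) * hkc + (↑a : ZMod p) * hzd -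
          (↑a : ZMod p) * hzf - y₁ * hfabd - (↑d : ZMod p) * hja + (↑d : ZMod p) * hkb
      have hda : (d : ZMod p) = -a :=
        eq_neg_of_add_eq_zero_left ((mul_eq_zero.mp key).resolve_left hyc0)
      linear_combination hzd + hja + y * hda
end

section
/- Let p be a prime and E a subgroup of Z_p^× with −1 ∈ E. Then for all x, x' ∈ Z_p ∖ {0} one has |xE ∩ (x'E + 1)| = |x'E ∩ (xE + 1)|. -/
lemma image_key {p : ℕ} (E : Subgroup (ZMod p)ˣ) (hneg : (-1 : (ZMod p)ˣ) ∈ E)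
    (x x' : ZMod p) :
    (fun z : ZMod p => 1 - z) '' (addCoset E x 0 ∩ addCoset E x' 1) =
      addCoset E x' 0 ∩ addCoset E x 1 := by
  ext z
  simp only [Set.mem_image, Set.mem_inter_iff, addCoset, Set.mem_setOf_eq]
  constructor
  · rintro ⟨w, ⟨⟨e, he, rfl⟩, ⟨f, hf, hw⟩⟩, rfl⟩
    refine ⟨⟨-f, (neg_one_mul (α := (ZMod p)ˣ) _ ▸ E.mul_mem hneg hf), ?_⟩, ⟨-e, (neg_one_mul (α := (ZMod p)ˣ) _ ▸ E.mul_mem hneg he), ?_⟩⟩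
    · push_cast
      rw [hw]; ring
    · push_cast
      ring
  · rintro ⟨⟨f, hf, rfl⟩, ⟨e, he, hz⟩⟩
    refine ⟨1 - (x' * f + 0), ⟨⟨-e, (neg_one_mul (α := (ZMod p)ˣ) _ ▸ E.mul_mem hneg he), ?_⟩, ⟨-f, (neg_one_mul (α := (ZMod p)ˣ) _ ▸ E.mul_mem hneg hf), ?_⟩⟩, by ring⟩
    · have := hz
      push_cast
      rw [hz] at *
      push_cast at this ⊢
      linear_combination this - hz
    · push_cast
      ring

/-- Let `p` be a prime and `E` a subgroup of `Z_p^×` with `−1 ∈ E`. Then for all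
`x, x' ≠ 0` one has `|xE ∩ (x'E + 1)| = |x'E ∩ (xE + 1)|`. -/
theorem stmt16 {p : ℕ} [Fact p.Prime]
    (E : Subgroup (ZMod p)ˣ) (hneg : (-1 : (ZMod p)ˣ) ∈ E)
    (x x' : ZMod p) (hx : x ≠ 0) (hx' : x' ≠ 0) :
    (addCoset E x 0 ∩ addCoset E x' 1).ncard =
      (addCoset E x' 0 ∩ addCoset E x 1).ncard := by
  rw [← image_key E hneg x x']
  exact (Set.ncard_image_of_injective _ (fun a b h => sub_right_injective h)).symm
end

section
/- Let X₁ and X₂ be nontrivial circulant p-graphs on the same vertex set Z_p, with associated groups E₁ and E₂. If E₁ = E₂, then Aut(X₁) = Aut(X₂) as subgroups of the group of permutations of Z_p. -/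
lemma fwdDiff_mul {M R : Type*} [AddCommMonoid M] [CommRing R] (h : M) (f g : M → R) :
    fwdDiff h (f * g) = fwdDiff h f * (fun x => g (x + h)) + f * fwdDiff h g := by
  ext x
  simp only [fwdDiff, Pi.mul_apply, Pi.add_apply]
  ring

namespace ZMod

variable {p : ℕ}

variable (p) in
def fwdDiffₗ : Module.End (ZMod p) (ZMod p → ZMod p) where
  toFun := fwdDiff 1
  map_add' := fwdDiff_add 1
  map_smul' := fwdDiff_const_smul 1

variable (p) in
def degreeLT (n : ℕ) : Submodule (ZMod p) (ZMod p → ZMod p) :=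
  LinearMap.ker (fwdDiffₗ p ^ n)

lemma mem_degreeLT {n : ℕ} {f : ZMod p → ZMod p} :
    f ∈ degreeLT p n ↔ (fwdDiff 1)^[n] f = 0 := by
  rw [degreeLT, LinearMap.mem_ker, Module.End.coe_pow]; rfl

lemma mem_degreeLT_succ {n : ℕ} {f : ZMod p → ZMod p} :
    f ∈ degreeLT p (n + 1) ↔ fwdDiff 1 f ∈ degreeLT p n := by
  rw [mem_degreeLT, mem_degreeLT, Function.iterate_succ_apply]

@[simp] lemma degreeLT_zero : degreeLT p 0 = ⊥ := by
  ext f; simp [mem_degreeLT]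

lemma degreeLT_mono : Monotone (degreeLT p) := by
  intro m n hmn f hf
  obtain ⟨k, rfl⟩ := Nat.exists_eq_add_of_le hmn
  rw [mem_degreeLT, add_comm, Function.iterate_add_apply, mem_degreeLT.mp hf]
  exact Function.iterate_fixed (fwdDiff_const 1 (0 : ZMod p)) k

lemma mem_degreeLT_add {k n : ℕ} {f : ZMod p → ZMod p} :
    f ∈ degreeLT p (k + n) ↔ (fwdDiffₗ p ^ n) f ∈ degreeLT p k := by
  simp only [degreeLT, LinearMap.mem_ker, pow_add, Module.End.mul_apply]

lemma mem_degreeLT_one [NeZero p] {f : ZMod p → ZMod p} :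
    f ∈ degreeLT p 1 ↔ ∀ x, f x = f 0 := by
  rw [mem_degreeLT, Function.iterate_one, funext_iff]
  simp only [fwdDiff, Pi.zero_apply, sub_eq_zero]
  refine ⟨fun h x => ?_, fun h x => by rw [h, h x]⟩
  have hper : Function.Periodic f 1 := h
  simpa using hper.nsmul_eq x.val

lemma comp_add_mem_degreeLT {n : ℕ} {f : ZMod p → ZMod p} (c : ZMod p)
    (hf : f ∈ degreeLT p n) : (fun x => f (x + c)) ∈ degreeLT p n := by
  rw [mem_degreeLT] at hf ⊢
  ext y
  rw [fwdDiff_iter_comp_add, hf, Pi.zero_apply, Pi.zero_apply]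

lemma pow_mem_degreeLT (a : ℕ) : (fun x : ZMod p => x ^ a) ∈ degreeLT p (a + 1) :=
  mem_degreeLT.mpr (fwdDiff_iter_pow_eq_zero_of_lt a.lt_succ_self)

variable [Fact p.Prime]

lemma pow_notMem_degreeLT {a : ℕ} (ha : a < p) : (fun x : ZMod p => x ^ a) ∉ degreeLT p a := by
  rw [mem_degreeLT, fwdDiff_iter_eq_factorial, funext_iff, not_forall]
  refine ⟨0, ?_⟩
  simp only [Pi.natCast_apply, Pi.zero_apply]
  rw [ZMod.natCast_eq_zero_iff, (Fact.out : p.Prime).dvd_factorial]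
  omega

lemma fwdDiffₗ_pow_self : fwdDiffₗ p ^ p = 0 := by
  have : CharP (Module.End (ZMod p) (ZMod p → ZMod p)) p :=
    Module.charP_end ⟨fun _ => 1, by
      rw [Ideal.torsionOf_eq_bot_iff_of_noZeroSMulDivisors]
      exact one_ne_zero⟩
  set T := fwdDiffₗ p + 1
  have hT : ∀ (n : ℕ) f x, (T ^ n) f x = f (x + n) := by
    intro n
    induction n with
    | zero => simp
    | succ n ih =>
      intro f x
      rw [pow_succ, Module.End.mul_apply, ih]
      simp [T, fwdDiffₗ, fwdDiff, add_assoc]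
  have hTp : T ^ p = 1 := by
    ext f x
    simp [hT]
  rw [show fwdDiffₗ p = T - 1 by simp [T], sub_pow_char_of_commute p (Commute.one_right T), hTp,
    one_pow, sub_self]

@[simp] lemma degreeLT_self : degreeLT p p = ⊤ := by
  rw [degreeLT, fwdDiffₗ_pow_self, LinearMap.ker_zero]

lemma degreeLT_succ_le_of_le {W : Submodule (ZMod p) (ZMod p → ZMod p)} {n : ℕ}
    {f : ZMod p → ZMod p} (hW : degreeLT p n ≤ W) (hfW : f ∈ W) (hf : f ∈ degreeLT p (n + 1))
    (hfn : f ∉ degreeLT p n) : degreeLT p (n + 1) ≤ W := by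
  intro g hg
  rw [add_comm] at hf hg
  set D := fwdDiffₗ p ^ n
  have hDf := mem_degreeLT_one.mp (mem_degreeLT_add.mp hf)
  have hDg := mem_degreeLT_one.mp (mem_degreeLT_add.mp hg)
  have hf0 : D f 0 ≠ 0 := fun h =>
    hfn (LinearMap.mem_ker.mpr (funext fun x => by rw [hDf x, h, Pi.zero_apply]))
  have hlow : g - (D g 0 / D f 0) • f ∈ degreeLT p n := by
    refine LinearMap.mem_ker.mpr (funext fun x => ?_)
    rw [map_sub, map_smul, Pi.sub_apply, Pi.smul_apply, hDf x, hDg x, smul_eq_mul,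
      div_mul_cancel₀ _ hf0, sub_self, Pi.zero_apply]
  simpa using W.add_mem (hW hlow) (W.smul_mem (D g 0 / D f 0) hfW)

lemma degreeLT_succ_le {W : Submodule (ZMod p) (ZMod p → ZMod p)}
    (hW : ∀ f ∈ W, fwdDiff 1 f ∈ W) {n : ℕ} {f : ZMod p → ZMod p} (hfW : f ∈ W)
    (hf : f ∈ degreeLT p (n + 1)) (hfn : f ∉ degreeLT p n) : degreeLT p (n + 1) ≤ W := by
  induction n generalizing f with
  | zero => exact degreeLT_succ_le_of_le (by simp) hfW hf hfn
  | succ n ih =>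
    exact degreeLT_succ_le_of_le (ih (hW f hfW) (mem_degreeLT_succ.mp hf)
      (mt mem_degreeLT_succ.mpr hfn)) hfW hf hfn

lemma exists_eq_degreeLT {W : Submodule (ZMod p) (ZMod p → ZMod p)}
    (hW : ∀ f ∈ W, (fun x => f (x + 1)) ∈ W) : ∃ n, W = degreeLT p n := by
  classical
  have hex : ∃ n, W ≤ degreeLT p n := ⟨p, by simp⟩
  obtain ⟨N, hN, hmin⟩ : ∃ N, W ≤ degreeLT p N ∧ ∀ n < N, ¬ W ≤ degreeLT p n :=
    ⟨Nat.find hex, Nat.find_spec hex, fun _ => Nat.find_min hex⟩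
  refine ⟨N, le_antisymm hN ?_⟩
  cases N with
  | zero => simp
  | succ n =>
    obtain ⟨f, hfW, hfn⟩ := SetLike.not_le_iff_exists.mp (hmin n n.lt_succ_self)
    exact degreeLT_succ_le (fun f hf => W.sub_mem (hW f hf) hf) hfW (hN hfW) hfn

lemma mul_mem_degreeLT {m n : ℕ} {f g : ZMod p → ZMod p} (hf : f ∈ degreeLT p m)
    (hg : g ∈ degreeLT p n) : f * g ∈ degreeLT p (m + n - 1) := by
  induction m generalizing n f g with
  | zero => simp_all
  | succ m ihm =>
    induction n generalizing g with
    | zero => simp_all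
    | succ n ihn =>
      rw [show m + 1 + (n + 1) - 1 = m + n + 1 by omega, mem_degreeLT_succ, fwdDiff_mul]
      refine add_mem ?_ ?_
      · simpa using ihm (mem_degreeLT_succ.mp hf) (comp_add_mem_degreeLT 1 hg)
      · simpa [Nat.add_right_comm m 1 n] using ihn (mem_degreeLT_succ.mp hg)

lemma forall_mul_mem_degreeLT_iff {a b : ℕ} (hb : 1 ≤ b) (hba : b ≤ a) (ha : a < p)
    {h : ZMod p → ZMod p} :
    (∀ g ∈ degreeLT p b, h * g ∈ degreeLT p a) ↔ h ∈ degreeLT p (a + 1 - b) := by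
  refine ⟨fun hh => ?_, fun hh g hg => ?_⟩
  swap
  · simpa [show a + 1 - b + b - 1 = a by omega] using mul_mem_degreeLT hh hg
  set W := ⨅ g ∈ degreeLT p b, (degreeLT p a).comap (LinearMap.mulRight (ZMod p) g)
  have mem_W : ∀ h, h ∈ W ↔ ∀ g ∈ degreeLT p b, h * g ∈ degreeLT p a := by
    simp [W, Submodule.mem_iInf]
  obtain ⟨n, hn⟩ := exists_eq_degreeLT (W := W) fun h hh => (mem_W _).mpr fun g hg => by
    convert comp_add_mem_degreeLT 1 ((mem_W h).mp hh _ (comp_add_mem_degreeLT (-1) hg)) using 1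
    ext x
    simp
  -- otherwise `x ^ (a + 1 - b) ∈ W`, and its product with `x ^ (b - 1)` would be `x ^ a`
  by_contra hlt
  have hn' : a + 1 - b < n := by
    by_contra! hle
    exact hlt (degreeLT_mono hle (hn ▸ (mem_W h).mpr hh))
  have := (mem_W _).mp (hn ▸ degreeLT_mono hn' (pow_mem_degreeLT (a + 1 - b)))
    _ (Nat.sub_add_cancel hb ▸ pow_mem_degreeLT (p := p) (b - 1))
  refine pow_notMem_degreeLT ha ?_
  convert this using 1
  ext x
  rw [Pi.mul_apply, ← pow_add, show a + 1 - b + (b - 1) = a by omega]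

lemma comp_mem_degreeLT_add_one_sub {a b : ℕ} (hb : 1 ≤ b) (hba : b ≤ a) (ha : a < p)
    {σ τ : ZMod p → ZMod p} (hστ : Function.LeftInverse τ σ)
    (hσa : ∀ f ∈ degreeLT p a, f ∘ σ ∈ degreeLT p a)
    (hτb : ∀ g ∈ degreeLT p b, g ∘ τ ∈ degreeLT p b) {f : ZMod p → ZMod p}
    (hf : f ∈ degreeLT p (a + 1 - b)) : f ∘ σ ∈ degreeLT p (a + 1 - b) := by
  rw [← forall_mul_mem_degreeLT_iff hb hba ha] at hf ⊢
  intro g hg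
  convert hσa _ (hf _ (hτb g hg)) using 1
  ext x
  simp [hστ x]

lemma exists_mul_add_of_mem_degreeLT_two {f : ZMod p → ZMod p} (hf : f ∈ degreeLT p 2) :
    ∃ a b, ∀ x, f x = a * x + b := by
  have hΔf := mem_degreeLT_one.mp (mem_degreeLT_succ.mp hf)
  have hlin : f - fwdDiff 1 f 0 • (fun x => x) ∈ degreeLT p 1 := by
    rw [mem_degreeLT_succ, degreeLT_zero, Submodule.mem_bot]
    ext x
    have hx := hΔf x
    simp only [fwdDiff, zero_add] at hx
    simp only [fwdDiff, zero_add, Pi.sub_apply, Pi.smul_apply, smul_eq_mul, Pi.zero_apply]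
    linear_combination hx
  refine ⟨fwdDiff 1 f 0, f 0, fun x => ?_⟩
  simpa [sub_eq_iff_eq_add, add_comm] using mem_degreeLT_one.mp hlin x

end ZMod

open Matrix ZMod

namespace SimpleGraph

section Laplacian

variable {V W R : Type*} [Fintype V] [DecidableEq V] [Fintype W] [DecidableEq W] [Ring R]
  {G : SimpleGraph V} {G' : SimpleGraph W} [DecidableRel G.Adj] [DecidableRel G'.Adj]

lemma lapMatrix_mulVec_comp_iso (φ : G ≃g G') (f : W → R) :
    G.lapMatrix R *ᵥ (f ∘ φ) = (G'.lapMatrix R *ᵥ f) ∘ φ := by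
  have : (G'.lapMatrix R).submatrix φ φ.toEquiv = G.lapMatrix R := by
    ext i j
    simp [lapMatrix, degMatrix, diagonal_apply, φ.injective.eq_iff, φ.map_adj_iff]
  have hf : (f ∘ φ) ∘ φ.toEquiv.symm = f := funext fun x => congrArg f (φ.apply_symm_apply x)
  rw [← this, submatrix_mulVec_equiv, hf]

lemma lapMatrix_mulVec_single_one_of_ne {v w : V} (h : v ≠ w) :
    (G.lapMatrix R *ᵥ Pi.single w 1) v = -if G.Adj v w then 1 else 0 := by
  rw [lapMatrix_mulVec_apply, Pi.single_eq_of_ne h, mul_zero, zero_sub, Finset.sum_pi_single']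
  congr 1
  exact if_congr (mem_neighborFinset G v w) rfl rfl

end Laplacian

variable {p : ℕ}

def IsCirculant (X : SimpleGraph (ZMod p)) : Prop :=
  ∀ c i j, X.Adj (i + c) (j + c) ↔ X.Adj i j

namespace IsCirculant

variable {X : SimpleGraph (ZMod p)} (hX : X.IsCirculant)
include hX

def addRightIso (c : ZMod p) : X ≃g X := ⟨Equiv.addRight c, hX c _ _⟩

lemma exists_adj_zero (h : X ≠ ⊥) : ∃ s, X.Adj s 0 := by
  obtain ⟨i, j, hij⟩ := ne_bot_iff_exists_adj.mp h
  exact ⟨i - j, by simpa [sub_eq_add_neg] using (hX (-j) i j).mpr hij⟩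

lemma exists_not_adj_zero (h : X ≠ ⊤) : ∃ t ≠ 0, ¬ X.Adj t 0 := by
  by_contra! hall
  refine h (SimpleGraph.ext ?_)
  ext i j
  rw [top_adj, ← hX (-j), add_neg_cancel, ← sub_eq_add_neg, ← sub_ne_zero]
  exact ⟨fun hij => hij.ne, hall (i - j)⟩

variable [NeZero p] [DecidableRel X.Adj]

lemma lapMatrix_mulVec_fwdDiff {R : Type*} [Ring R] (f : ZMod p → R) :
    X.lapMatrix R *ᵥ fwdDiff 1 f = fwdDiff 1 (X.lapMatrix R *ᵥ f) := by
  have hshift := lapMatrix_mulVec_comp_iso (hX.addRightIso 1) f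
  change X.lapMatrix R *ᵥ (f ∘ hX.addRightIso 1 - f) = _
  rw [mulVec_sub, hshift]
  rfl

variable [Fact p.Prime]

lemma exists_ker_lapMatrix_eq_degreeLT :
    ∃ m, LinearMap.ker (X.lapMatrix (ZMod p)).mulVecLin = degreeLT p m :=
  exists_eq_degreeLT fun f hf => by
    rw [LinearMap.mem_ker, mulVecLin_apply] at hf ⊢
    exact (lapMatrix_mulVec_comp_iso (hX.addRightIso 1) f).trans (by rw [hf]; rfl)

lemma mem_degreeLT_succ_iff {m : ℕ}
    (hm : LinearMap.ker (X.lapMatrix (ZMod p)).mulVecLin = degreeLT p m) {f : ZMod p → ZMod p} :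
    f ∈ degreeLT p (m + 1) ↔ X.lapMatrix (ZMod p) *ᵥ f ∈ degreeLT p 1 := by
  rw [mem_degreeLT_succ, ← hm, mem_degreeLT_succ, degreeLT_zero, Submodule.mem_bot,
    LinearMap.mem_ker, mulVecLin_apply, hX.lapMatrix_mulVec_fwdDiff]

theorem exists_mul_add_eq (hbot : X ≠ ⊥) (htop : X ≠ ⊤) (σ : X ≃g X) :
    ∃ a b : ZMod p, ∀ x, σ x = a * x + b := by
  obtain ⟨m, hm⟩ := hX.exists_ker_lapMatrix_eq_degreeLT
  have hker : ∀ f, f ∈ degreeLT p m ↔ X.lapMatrix (ZMod p) *ᵥ f = 0 := fun f => by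
    rw [← hm, LinearMap.mem_ker, mulVecLin_apply]
  have hm1 : 1 ≤ m := by
    by_contra! h0
    have := (hker _).mpr (lapMatrix_mulVec_const_eq_zero X)
    simp [show m = 0 by omega, funext_iff] at this
  have hmp : m + 1 < p := by
    by_contra! hpm
    -- then `L δ₀` would be constant, but it is `-1` at neighbours of `0`, `0` at non-neighbours
    have hδ : Pi.single 0 1 ∈ degreeLT p (m + 1) := degreeLT_mono hpm (by simp)
    rw [hX.mem_degreeLT_succ_iff hm] at hδ
    obtain ⟨s, hs⟩ := hX.exists_adj_zero hbot
    obtain ⟨t, ht0, ht⟩ := hX.exists_not_adj_zero htop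
    have := (mem_degreeLT_one.mp hδ s).trans (mem_degreeLT_one.mp hδ t).symm
    rw [lapMatrix_mulVec_single_one_of_ne hs.ne, lapMatrix_mulVec_single_one_of_ne ht0,
      if_pos hs, if_neg ht] at this
    simp at this
  have hσm : ∀ f ∈ degreeLT p m, f ∘ σ.symm ∈ degreeLT p m := fun f hf => by
    rw [hker] at hf ⊢
    rw [lapMatrix_mulVec_comp_iso, hf]
    rfl
  have hσm1 : ∀ f ∈ degreeLT p (m + 1), f ∘ σ ∈ degreeLT p (m + 1) := fun f hf => by
    rw [hX.mem_degreeLT_succ_iff hm, mem_degreeLT_one] at hf ⊢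
    rw [lapMatrix_mulVec_comp_iso]
    intro x
    simp [hf (σ x), hf (σ 0)]
  have hdeg : m + 1 + 1 - m = 1 + 1 := by omega
  have h2 : (fun x => x ^ 1) ∘ σ ∈ degreeLT p (1 + 1) :=
    hdeg ▸ comp_mem_degreeLT_add_one_sub hm1 m.le_succ hmp σ.symm_apply_apply hσm1 hσm
      (hdeg ▸ pow_mem_degreeLT 1)
  simpa using exists_mul_add_of_mem_degreeLT_two h2

end IsCirculant

end SimpleGraph

lemma Units.image_mul_left_eq_self_iff {M : Type*} [Monoid M] (u : Mˣ) (S : Set M) :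
    (fun s => (u : M) * s) '' S = S ↔ ∀ d, (u : M) * d ∈ S ↔ d ∈ S := by
  rw [Set.image_eq_preimage_of_inverse (g := fun s => (↑u⁻¹ : M) * s) (fun _ => by simp)
    (fun _ => by simp), Set.ext_iff]
  exact ⟨fun h d => by simpa using (h (u * d)).symm, fun h x => by simpa using (h (↑u⁻¹ * x)).symm⟩

section ConnectionSet

variable {p : ℕ} {X : SimpleGraph (ZMod p)} {S : Set (ZMod p)}
  (hS : ∀ i j : ZMod p, X.Adj i j ↔ j - i ∈ S)
include hS

lemma isCirculant_of_adj_iff : X.IsCirculant := fun c i j => by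
  rw [hS, hS, add_sub_add_right_eq_sub]

lemma ne_bot_of_adj_iff (hne : S.Nonempty) : X ≠ ⊥ := by
  obtain ⟨s, hs⟩ := hne
  rintro rfl
  exact (hS 0 s).mpr (by simpa using hs)

lemma ne_top_of_adj_iff (hnc : S ≠ {x : ZMod p | x ≠ 0}) : X ≠ ⊤ := by
  rintro rfl
  refine hnc (Set.ext fun x => ?_)
  simpa [eq_comm] using (hS 0 x).symm

lemma isCircAut_iff_of_eq_mul_add {σ : Equiv.Perm (ZMod p)} {a b : ZMod p}
    (hσ : ∀ x, σ x = a * x + b) : IsCircAut X σ ↔ ∀ d, a * d ∈ S ↔ d ∈ S := by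
  simp only [IsCircAut, hS, hσ, add_sub_add_right_eq_sub, ← mul_sub]
  exact ⟨fun h d => by simpa using h 0 d, fun h i j => h (j - i)⟩

lemma isCircAut_iff [Fact p.Prime] (hne : S.Nonempty) (hnc : S ≠ {x : ZMod p | x ≠ 0})
    {σ : Equiv.Perm (ZMod p)} : IsCircAut X σ ↔
      ∃ a : (ZMod p)ˣ, (fun s => (a : ZMod p) * s) '' S = S ∧ ∃ b, ∀ x, σ x = a * x + b := by
  classical
  refine ⟨fun hσ => ?_, fun ⟨a, ha, b, hσ⟩ => ?_⟩
  · obtain ⟨a, b, hab⟩ := (isCirculant_of_adj_iff hS).exists_mul_add_eq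
      (ne_bot_of_adj_iff hS hne) (ne_top_of_adj_iff hS hnc) ⟨σ, hσ _ _⟩
    replace hab : ∀ x, σ x = a * x + b := hab
    have ha : a ≠ 0 := by
      rintro rfl
      exact zero_ne_one (σ.injective (by rw [hab, hab, zero_mul, zero_mul]))
    refine ⟨Units.mk0 a ha, ?_, b, hab⟩
    rw [Units.image_mul_left_eq_self_iff]
    exact (isCircAut_iff_of_eq_mul_add hS hab).mp hσ
  · exact (isCircAut_iff_of_eq_mul_add hS hσ).mpr ((Units.image_mul_left_eq_self_iff a S).mp ha)

end ConnectionSet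

/-- If `X₁` and `X₂` are nontrivial circulant `p`-graphs on `Z_p` with associated groups
`E₁ = E₂`, then `Aut(X₁) = Aut(X₂)` as sets of permutations of `Z_p`. -/
theorem stmt17 {p : ℕ} [Fact p.Prime]
    (X₁ X₂ : SimpleGraph (ZMod p)) (S₁ S₂ : Set (ZMod p))
    (hS₁ : ∀ i j : ZMod p, X₁.Adj i j ↔ j - i ∈ S₁)
    (hS₂ : ∀ i j : ZMod p, X₂.Adj i j ↔ j - i ∈ S₂)
    (hne₁ : S₁.Nonempty) (hnc₁ : S₁ ≠ {x : ZMod p | x ≠ 0})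
    (hne₂ : S₂.Nonempty) (hnc₂ : S₂ ≠ {x : ZMod p | x ≠ 0})
    (E₁ E₂ : Subgroup (ZMod p)ˣ)
    (hE₁ : ∀ a : (ZMod p)ˣ, a ∈ E₁ ↔ (fun s => (a : ZMod p) * s) '' S₁ = S₁)
    (hE₂ : ∀ a : (ZMod p)ˣ, a ∈ E₂ ↔ (fun s => (a : ZMod p) * s) '' S₂ = S₂)
    (hEE : E₁ = E₂) :
    ∀ σ : Equiv.Perm (ZMod p), IsCircAut X₁ σ ↔ IsCircAut X₂ σ := by
  intro σ
  rw [isCircAut_iff hS₁ hne₁ hnc₁, isCircAut_iff hS₂ hne₂ hnc₂]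
  simp only [← hE₁, ← hE₂, hEE]
end
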